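/- arXiv:2310.00521 — 3 statements merged into one kernel-verified Lean document; each statement's English description precedes it below -/
import Mathlib

section
/- On special partitions of types B and C, the internal duality d (transpose) commutes with the bijection f, i.e. d ∘ f = f ∘ d as maps P^{sp}_B(2n+1) → P^{sp}_C(2n): for all λ ∈ P^{sp}_B(2n+1), ((λ⁻)_C)* = ((λ*)⁻)_C. -/
/-- A partition of `N`: a weakly decreasing function `ℕ → ℕ` (0-indexed parts,
eventually zero) whose sum is `N`. -/
structure FunPartition (N : ℕ) where
  part : ℕ → ℕ
  antitone : ∀ ⦃i j : ℕ⦄, i ≤ j → part j ≤ part i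
  bound : ℕ
  bound_zero : ∀ i, bound ≤ i → part i = 0
  sum_parts : ∑ i ∈ Finset.range bound, part i = N

namespace FunPartition

variable {M N : ℕ}

/-- Multiplicity of the part `s` in `p` (intended for `s ≥ 1`). -/
def mult (p : FunPartition N) (s : ℕ) : ℕ :=
  ((Finset.range p.bound).filter (fun j => p.part j = s)).card

/-- Height `h_p(s) = #{j : p_j ≥ s}`, with the convention that `height p 0`
is the number of (positive) parts of `p`. -/
def height (p : FunPartition N) (s : ℕ) : ℕ :=
  ((Finset.range p.bound).filter (fun j => max s 1 ≤ p.part j)).card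

/-- `Dominates lam mu` means `mu ⪯ lam` in the dominance order. -/
def Dominates (lam mu : FunPartition N) : Prop :=
  ∀ k : ℕ, ∑ i ∈ Finset.range k, mu.part i ≤ ∑ i ∈ Finset.range k, lam.part i

/-- The transpose (conjugate) part function: `(p*)_i = #{j : p_j ≥ i+1}` (0-indexed). -/
def transposeFun (p : FunPartition N) : ℕ → ℕ :=
  fun i => ((Finset.range p.bound).filter (fun j => i + 1 ≤ p.part j)).card

/-- Every (positive) part congruent to `ε` mod 2 has even multiplicity. -/
def EvenMult (ε : ℕ) (p : FunPartition N) : Prop :=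
  ∀ s, 1 ≤ s → s % 2 = ε % 2 → mult p s % 2 = 0

/-- Membership in `P_{ε,ε'}(N)`: parts `≡ ε (mod 2)` have even multiplicity and
height `≡ ε' (mod 2)`, including the convention at `s = 0` (whose height is the
number of parts) when `ε = 0`. -/
def SpecialCond (ε ε' : ℕ) (p : FunPartition N) : Prop :=
  EvenMult ε p ∧
  (∀ s, 1 ≤ s → mult p s ≠ 0 → s % 2 = ε % 2 → height p s % 2 = ε' % 2) ∧
  (ε = 0 → height p 0 % 2 = ε' % 2)

/-- `q` is the `ε`-collapse of `p`: the dominance-greatest partition dominated by `p`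
all of whose parts `≡ ε (mod 2)` have even multiplicity. -/
def IsCollapse (ε : ℕ) (p q : FunPartition N) : Prop :=
  EvenMult ε q ∧ Dominates p q ∧
    ∀ r : FunPartition N, EvenMult ε r → Dominates p r → Dominates q r

/-- `q = p⁻`: decrease the smallest (positive) part of `p` by one. -/
def IsMinus (p : FunPartition M) (q : FunPartition N) : Prop :=
  (∀ i, i + 1 ≠ height p 0 → q.part i = p.part i) ∧
  q.part (height p 0 - 1) = p.part (height p 0 - 1) - 1

/-- `q = p⁺`: increase the largest part of `p` by one. -/
def IsPlus (p : FunPartition M) (q : FunPartition N) : Prop :=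
  q.part 0 = p.part 0 + 1 ∧ ∀ i, 1 ≤ i → q.part i = p.part i

/-- `q = f_{BC}(p) = (p⁻)_C`. -/
def IsFBC (n : ℕ) (p : FunPartition (2*n+1)) (q : FunPartition (2*n)) : Prop :=
  ∃ pm : FunPartition (2*n), IsMinus p pm ∧ IsCollapse 1 pm q

/-- `q = f_{CB}(p) = (p⁺)_B`. -/
def IsFCB (n : ℕ) (p : FunPartition (2*n)) (q : FunPartition (2*n+1)) : Prop :=
  ∃ pp : FunPartition (2*n+1), IsPlus p pp ∧ IsCollapse 0 pp q

end FunPartition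
namespace SPAux
open Finset FunPartition

variable {M N : ℕ}

/-- Partial sum of the first `k` parts. -/
def Ssum (p : FunPartition N) (k : ℕ) : ℕ := ∑ i ∈ Finset.range k, p.part i

lemma Ssum_succ (p : FunPartition N) (k : ℕ) : Ssum p (k+1) = Ssum p k + p.part k :=
  Finset.sum_range_succ _ _

lemma Ssum_zero (p : FunPartition N) : Ssum p 0 = 0 := rfl

lemma Ssum_mono (p : FunPartition N) {k l : ℕ} (h : k ≤ l) : Ssum p k ≤ Ssum p l :=
  Finset.sum_le_sum_of_subset (Finset.range_subset_range.2 h)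

lemma part_lt_bound (p : FunPartition N) {i : ℕ} (h : 1 ≤ p.part i) : i < p.bound := by
  by_contra hc
  have := p.bound_zero i (le_of_not_gt hc)
  omega

lemma lowerset_eq_range (s : Finset ℕ) (h : ∀ i ∈ s, ∀ j, j ≤ i → j ∈ s) :
    s = Finset.range s.card := by
  have h2 : ∀ k, k ∈ s ↔ k < s.card := by
    intro k
    constructor
    · intro hk
      by_contra hc
      push_neg at hc
      have hsub : Finset.range (k+1) ⊆ s := by
        intro j hj
        exact h k hk j (Nat.lt_succ_iff.mp (Finset.mem_range.mp hj))
      have := Finset.card_le_card hsub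
      simp only [Finset.card_range] at this
      omega
    · intro hk
      by_contra hc
      have hsub : s ⊆ Finset.range k := by
        intro i hi
        rcases lt_or_ge i k with h'|h'
        · exact Finset.mem_range.2 h'
        · exact absurd (h i hi k h') hc
      have := Finset.card_le_card hsub
      simp only [Finset.card_range] at this
      omega
  ext k
  simp [h2]

lemma height_filter (p : FunPartition N) (t : ℕ) :
    (Finset.range p.bound).filter (fun j => max t 1 ≤ p.part j) = Finset.range (p.height t) := by
  have h := lowerset_eq_range ((Finset.range p.bound).filter (fun j => max t 1 ≤ p.part j)) ?_
  · exact h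
  · intro i hi j hj
    simp only [Finset.mem_filter, Finset.mem_range] at hi ⊢
    have h1 : p.part i ≤ p.part j := p.antitone hj
    refine ⟨part_lt_bound p ?_, by omega⟩
    omega

lemma le_part_iff (p : FunPartition N) {t : ℕ} (ht : 1 ≤ t) (i : ℕ) :
    t ≤ p.part i ↔ i < p.height t := by
  have hmax : max t 1 = t := by omega
  constructor
  · intro h
    have hmem : i ∈ (Finset.range p.bound).filter (fun j => max t 1 ≤ p.part j) := by
      simp only [Finset.mem_filter, Finset.mem_range, hmax]
      exact ⟨part_lt_bound p (by omega), h⟩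
    rw [height_filter] at hmem
    exact Finset.mem_range.mp hmem
  · intro h
    have hmem : i ∈ Finset.range (p.height t) := Finset.mem_range.2 h
    rw [← height_filter] at hmem
    simp only [Finset.mem_filter, hmax] at hmem
    exact hmem.2

lemma height_mono (p : FunPartition N) {t t' : ℕ} (ht : 1 ≤ t) (h : t ≤ t') :
    p.height t' ≤ p.height t := by
  by_contra hc
  push_neg at hc
  have h1 : t' ≤ p.part (p.height t) := (le_part_iff p (by omega) _).2 hc
  have h2 : t ≤ p.part (p.height t) := le_trans h h1
  have := (le_part_iff p ht _).1 h2
  omega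

lemma height_zero (p : FunPartition N) : p.height 0 = p.height 1 := by
  simp [FunPartition.height]

lemma height_le_bound (p : FunPartition N) (t : ℕ) : p.height t ≤ p.bound := by
  have := Finset.card_le_card (Finset.filter_subset (fun j => max t 1 ≤ p.part j) (Finset.range p.bound))
  simpa [FunPartition.height] using this

lemma part_eq_zero_of_height_le (p : FunPartition N) {i : ℕ} (h : p.height 1 ≤ i) :
    p.part i = 0 := by
  by_contra hc
  have := (le_part_iff p le_rfl i).1 (by omega)
  omega

lemma Ssum_stable (p : FunPartition N) {k l : ℕ} (hz : ∀ i, k ≤ i → p.part i = 0) (h : k ≤ l) :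
    Ssum p l = Ssum p k := by
  unfold Ssum
  rw [Finset.range_eq_Ico, ← Finset.sum_Ico_consecutive _ (Nat.zero_le k) h]
  have : ∑ i ∈ Finset.Ico k l, p.part i = 0 := by
    apply Finset.sum_eq_zero
    intro i hi
    exact hz i (Finset.mem_Ico.mp hi).1
  rw [← Finset.range_eq_Ico]
  omega

lemma Ssum_of_bound_le (p : FunPartition N) {k : ℕ} (h : p.bound ≤ k) : Ssum p k = N := by
  rw [Ssum_stable p p.bound_zero h]
  exact p.sum_parts

lemma Ssum_of_height_le (p : FunPartition N) {k : ℕ} (h : p.height 1 ≤ k) : Ssum p k = N := by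
  rcases le_or_gt p.bound k with h'|h'
  · exact Ssum_of_bound_le p h'
  · have h1 : Ssum p p.bound = Ssum p k := by
      apply Ssum_stable p (fun i hi => part_eq_zero_of_height_le p (le_trans h hi)) (le_of_lt h')
    rw [← h1]
    exact p.sum_parts

lemma Ssum_le_total (p : FunPartition N) (k : ℕ) : Ssum p k ≤ N := by
  rcases le_or_gt p.bound k with h|h
  · exact le_of_eq (Ssum_of_bound_le p h)
  · have h1 := Ssum_mono p (le_of_lt h)
    have h2 : Ssum p p.bound = N := p.sum_parts
    omega

lemma height_eq_mult_add (p : FunPartition N) {s : ℕ} (hs : 1 ≤ s) :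
    p.height s = p.mult s + p.height (s+1) := by
  classical
  have hmax : max s 1 = s := by omega
  have hmax' : max (s+1) 1 = s + 1 := by omega
  unfold FunPartition.height FunPartition.mult
  rw [hmax, hmax']
  rw [← Finset.card_filter_add_card_filter_not (s := (Finset.range p.bound).filter (fun j => s ≤ p.part j)) (p := fun j => p.part j = s)]
  have e1 : ((Finset.range p.bound).filter (fun j => s ≤ p.part j)).filter (fun j => p.part j = s)
      = (Finset.range p.bound).filter (fun j => p.part j = s) := by
    rw [Finset.filter_filter]
    apply Finset.filter_congr
    intro x _
    constructor
    · exact fun h => h.2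
    · intro h; omega
  have e2 : ((Finset.range p.bound).filter (fun j => s ≤ p.part j)).filter (fun j => ¬ p.part j = s)
      = (Finset.range p.bound).filter (fun j => s + 1 ≤ p.part j) := by
    rw [Finset.filter_filter]
    apply Finset.filter_congr
    intro x _
    constructor
    · intro h; omega
    · intro h; omega
  rw [e1, e2]

end SPAux
namespace SPAux
open Finset FunPartition

variable {M N : ℕ}

lemma transposeFun_eq_height (p : FunPartition N) (i : ℕ) :
    transposeFun p i = p.height (i+1) := by
  unfold FunPartition.transposeFun FunPartition.height
  congr 1
  apply Finset.filter_congr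
  intro x _
  constructor
  · intro h; omega
  · intro h; omega

lemma Ssum_transposeFun (p : FunPartition N) (k : ℕ) :
    ∑ i ∈ Finset.range k, transposeFun p i = ∑ j ∈ Finset.range p.bound, min (p.part j) k := by
  unfold FunPartition.transposeFun
  have step1 : ∀ i, ((Finset.range p.bound).filter (fun j => i + 1 ≤ p.part j)).card
      = ∑ j ∈ Finset.range p.bound, (if i + 1 ≤ p.part j then 1 else 0) := by
    intro i
    rw [Finset.card_filter]
  simp only [step1]
  rw [Finset.sum_comm]
  apply Finset.sum_congr rfl
  intro j _
  have : (Finset.range k).filter (fun i => i + 1 ≤ p.part j) = Finset.range (min (p.part j) k) := by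
    ext i
    simp only [Finset.mem_filter, Finset.mem_range]
    omega
  calc ∑ i ∈ Finset.range k, (if i + 1 ≤ p.part j then 1 else 0)
      = ((Finset.range k).filter (fun i => i + 1 ≤ p.part j)).card := by
        rw [Finset.card_filter]
    _ = min (p.part j) k := by rw [this, Finset.card_range]

/-- Sum of the parts exceeding level `k` (the boxes to the right of column `k`). -/
def Epos (p : FunPartition N) (k : ℕ) : ℕ := ∑ j ∈ Finset.range p.bound, (p.part j - k)

lemma min_add_Epos (p : FunPartition N) (k : ℕ) :
    (∑ j ∈ Finset.range p.bound, min (p.part j) k) + Epos p k = N := by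
  unfold Epos
  rw [← Finset.sum_add_distrib]
  have e : ∑ j ∈ Finset.range p.bound, (min (p.part j) k + (p.part j - k))
      = ∑ j ∈ Finset.range p.bound, p.part j := by
    apply Finset.sum_congr rfl
    intro j _
    omega
  rw [e]
  exact p.sum_parts

lemma sum_sub_lb (p : FunPartition N) (k l : ℕ) :
    Ssum p l ≤ (∑ j ∈ Finset.range l, (p.part j - k)) + k * l := by
  unfold Ssum
  have : ∑ j ∈ Finset.range l, p.part j ≤ ∑ j ∈ Finset.range l, ((p.part j - k) + k) := by
    apply Finset.sum_le_sum
    intro j _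
    omega
  rw [Finset.sum_add_distrib] at this
  simp only [Finset.sum_const, Finset.card_range, smul_eq_mul] at this
  have hc : k * l = l * k := Nat.mul_comm k l
  omega

lemma Epos_ge (p : FunPartition N) (k l : ℕ) :
    ∑ j ∈ Finset.range l, (p.part j - k) ≤ Epos p k := by
  unfold Epos
  rcases le_or_gt l p.bound with h|h
  · apply Finset.sum_le_sum_of_subset (Finset.range_subset_range.2 h)
  · have : ∑ j ∈ Finset.range l, (p.part j - k) = ∑ j ∈ Finset.range p.bound, (p.part j - k) := by
      rw [Finset.range_eq_Ico, ← Finset.sum_Ico_consecutive _ (Nat.zero_le p.bound) (le_of_lt h)]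
      have hz : ∑ j ∈ Finset.Ico p.bound l, (p.part j - k) = 0 := by
        apply Finset.sum_eq_zero
        intro i hi
        have := p.bound_zero i (Finset.mem_Ico.mp hi).1
        omega
      rw [← Finset.range_eq_Ico]
      omega
    omega

lemma Epos_lb (p : FunPartition N) (k k' : ℕ) : Ssum p k' ≤ Epos p k + k * k' := by
  have h1 := sum_sub_lb p k k'
  have h2 := Epos_ge p k k'
  omega

lemma Epos_eq (p : FunPartition N) (k : ℕ) :
    Epos p k + k * p.height (k+1) = Ssum p (p.height (k+1)) := by
  set h' := p.height (k+1) with hh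
  have hchar : ∀ j, k + 1 ≤ p.part j ↔ j < h' := fun j => le_part_iff p (by omega) j
  have h'b : h' ≤ p.bound := height_le_bound p _
  have e1 : Epos p k = ∑ j ∈ Finset.range h', (p.part j - k) := by
    unfold Epos
    rw [Finset.range_eq_Ico, ← Finset.sum_Ico_consecutive _ (Nat.zero_le h') h'b]
    have hz : ∑ j ∈ Finset.Ico h' p.bound, (p.part j - k) = 0 := by
      apply Finset.sum_eq_zero
      intro i hi
      have hge := (Finset.mem_Ico.mp hi).1
      have : ¬ (k + 1 ≤ p.part i) := by
        rw [hchar i]; omega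
      omega
    rw [← Finset.range_eq_Ico]
    omega
  rw [e1]
  unfold Ssum
  have : ∑ j ∈ Finset.range h', ((p.part j - k) + k) = ∑ j ∈ Finset.range h', p.part j := by
    apply Finset.sum_congr rfl
    intro j hj
    have := (hchar j).2 (Finset.mem_range.mp hj)
    omega
  rw [Finset.sum_add_distrib] at this
  simp only [Finset.sum_const, Finset.card_range, smul_eq_mul] at this
  have hc : k * h' = h' * k := Nat.mul_comm k h'
  omega

lemma Ssum_parity (p : FunPartition N) (k : ℕ) :
    Ssum p k % 2 = ((Finset.range k).filter (fun i => p.part i % 2 = 1)).card % 2 := by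
  induction k with
  | zero => simp [Ssum]
  | succ k ih =>
    rw [Ssum_succ]
    rw [Finset.range_add_one, Finset.filter_insert]
    split_ifs with h
    · rw [Finset.card_insert_of_notMem (by simp)]
      omega
    · have : p.part k % 2 = 0 := by omega
      omega

lemma card_even_odd (p : FunPartition N) (k : ℕ) :
    ((Finset.range k).filter (fun i => p.part i % 2 = 1)).card
      + ((Finset.range k).filter (fun i => p.part i % 2 = 0)).card = k := by
  classical
  have := Finset.card_filter_add_card_filter_not (s := Finset.range k)
    (p := fun i => p.part i % 2 = 1)
  have e : (Finset.range k).filter (fun i => ¬ p.part i % 2 = 1)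
      = (Finset.range k).filter (fun i => p.part i % 2 = 0) := by
    apply Finset.filter_congr
    intro x _
    constructor
    · intro h; omega
    · intro h; omega
  rw [e] at this
  simpa using this

end SPAux
namespace SPAux
open Finset FunPartition

variable {M N : ℕ}

lemma cnt_even_aux (p : FunPartition N) (hp : EvenMult 0 p) :
    ∀ d t, 1 ≤ t → p.part 0 + 1 ≤ t + d →
      ((Finset.range p.bound).filter (fun i => t ≤ p.part i ∧ p.part i % 2 = 0)).card % 2 = 0 := by
  intro d
  induction d with
  | zero =>
    intro t ht hle
    have : (Finset.range p.bound).filter (fun i => t ≤ p.part i ∧ p.part i % 2 = 0) = ∅ := by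
      apply Finset.filter_eq_empty_iff.2
      intro i _
      have : p.part i ≤ p.part 0 := p.antitone (Nat.zero_le i)
      omega
    rw [this]
    simp
  | succ d ih =>
    intro t ht hle
    rcases le_or_gt t (p.part 0) with hcase|hcase
    · classical
      have hsplit := Finset.card_filter_add_card_filter_not
        (s := (Finset.range p.bound).filter (fun i => t ≤ p.part i ∧ p.part i % 2 = 0))
        (p := fun i => p.part i = t)
      have e1 : ((Finset.range p.bound).filter (fun i => t ≤ p.part i ∧ p.part i % 2 = 0)).filter (fun i => p.part i = t)
          = if t % 2 = 0 then (Finset.range p.bound).filter (fun i => p.part i = t) else ∅ := by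
        rw [Finset.filter_filter]
        split_ifs with hpar
        · apply Finset.filter_congr
          intro x _
          constructor
          · intro h; omega
          · intro h; omega
        · apply Finset.filter_eq_empty_iff.2
          intro x _
          intro hcontra
          omega
      have e2 : ((Finset.range p.bound).filter (fun i => t ≤ p.part i ∧ p.part i % 2 = 0)).filter (fun i => ¬ p.part i = t)
          = (Finset.range p.bound).filter (fun i => t + 1 ≤ p.part i ∧ p.part i % 2 = 0) := by
        rw [Finset.filter_filter]
        apply Finset.filter_congr
        intro x _
        constructor
        · intro h; omega
        · intro h; omega
      have h2 := ih (t+1) (by omega) (by omega)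
      rw [e1, e2] at hsplit
      split_ifs at hsplit with hpar
      · have hmult : p.mult t % 2 = 0 := hp t ht (by omega)
        unfold FunPartition.mult at hmult
        omega
      · simp only [Finset.card_empty] at hsplit
        omega
    · have : (Finset.range p.bound).filter (fun i => t ≤ p.part i ∧ p.part i % 2 = 0) = ∅ := by
        apply Finset.filter_eq_empty_iff.2
        intro i _
        have : p.part i ≤ p.part 0 := p.antitone (Nat.zero_le i)
        omega
      rw [this]
      simp

lemma cnt_even (p : FunPartition N) (hp : EvenMult 0 p) {t : ℕ} (ht : 1 ≤ t) :
    ((Finset.range p.bound).filter (fun i => t ≤ p.part i ∧ p.part i % 2 = 0)).card % 2 = 0 :=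
  cnt_even_aux p hp (p.part 0 + 1) t ht (by omega)

lemma even_cnt_prefix (p : FunPartition N) (hp : EvenMult 0 p) (k' : ℕ) :
    ((Finset.range k').filter (fun i => p.part i % 2 = 0)).card % 2
      = (if p.part k' % 2 = 0 then k' - p.height (p.part k' + 1) else 0) % 2 := by
  classical
  set v := p.part k' with hv
  have hH : p.height (v+1) ≤ k' := by
    by_contra hc
    push_neg at hc
    have := (le_part_iff p (t := v+1) (by omega) k').2 hc
    omega
  have hsplit := Finset.card_filter_add_card_filter_not
    (s := (Finset.range k').filter (fun i => p.part i % 2 = 0))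
    (p := fun i => v + 1 ≤ p.part i)
  have e1 : ((Finset.range k').filter (fun i => p.part i % 2 = 0)).filter (fun i => v + 1 ≤ p.part i)
      = (Finset.range p.bound).filter (fun i => v + 1 ≤ p.part i ∧ p.part i % 2 = 0) := by
    rw [Finset.filter_filter]
    ext x
    simp only [Finset.mem_filter, Finset.mem_range]
    constructor
    · rintro ⟨hx, hev, hge⟩
      exact ⟨part_lt_bound p (by omega), hge, hev⟩
    · rintro ⟨hx, hge, hev⟩
      refine ⟨?_, hev, hge⟩
      by_contra hc
      push_neg at hc
      have : p.part x ≤ v := by rw [hv]; exact p.antitone hc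
      omega
  have e2 : ((Finset.range k').filter (fun i => p.part i % 2 = 0)).filter (fun i => ¬ (v + 1 ≤ p.part i))
      = if v % 2 = 0 then (Finset.range k') \ (Finset.range (p.height (v+1))) else ∅ := by
    rw [Finset.filter_filter]
    split_ifs with hpar
    · ext x
      simp only [Finset.mem_filter, Finset.mem_range, Finset.mem_sdiff]
      constructor
      · rintro ⟨hx, hev, hle⟩
        refine ⟨hx, ?_⟩
        intro hcontra
        have := (le_part_iff p (t := v+1) (by omega) x).2 hcontra
        omega
      · rintro ⟨hx, hnot⟩
        have hxv : p.part x = v := by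
          have h1 : ¬ (v + 1 ≤ p.part x) := by
            intro hcontra
            exact hnot ((le_part_iff p (t := v+1) (by omega) x).1 hcontra)
          have h2 : v ≤ p.part x := by rw [hv]; exact p.antitone (le_of_lt hx)
          omega
        refine ⟨hx, by omega, by omega⟩
    · apply Finset.filter_eq_empty_iff.2
      intro x hx
      rintro ⟨hev, hle⟩
      have h2 : v ≤ p.part x := by rw [hv]; exact p.antitone (le_of_lt (Finset.mem_range.mp hx))
      have hxv : p.part x = v := by omega
      omega
  rw [e1, e2] at hsplit
  have hcnt := cnt_even p hp (t := v + 1) (by omega)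
  split_ifs at hsplit ⊢ with hpar
  · rw [Finset.card_sdiff_of_subset (Finset.range_subset_range.2 hH)] at hsplit
    simp only [Finset.card_range] at hsplit
    omega
  · simp only [Finset.card_empty] at hsplit
    omega

lemma sum_filter_even_aux (r : FunPartition N) (hr : EvenMult 1 r) :
    ∀ d t, 1 ≤ t → r.part 0 + 1 ≤ t + d →
      (∑ i ∈ (Finset.range r.bound).filter (fun i => t ≤ r.part i), r.part i) % 2 = 0 := by
  intro d
  induction d with
  | zero =>
    intro t ht hle
    have : (Finset.range r.bound).filter (fun i => t ≤ r.part i) = ∅ := by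
      apply Finset.filter_eq_empty_iff.2
      intro i _
      have : r.part i ≤ r.part 0 := r.antitone (Nat.zero_le i)
      omega
    rw [this]
    simp
  | succ d ih =>
    intro t ht hle
    rcases le_or_gt t (r.part 0) with hcase|hcase
    · classical
      have hsplit := Finset.sum_filter_add_sum_filter_not
        ((Finset.range r.bound).filter (fun i => t ≤ r.part i))
        (fun i => r.part i = t) r.part
      have e1 : ((Finset.range r.bound).filter (fun i => t ≤ r.part i)).filter (fun i => r.part i = t)
          = (Finset.range r.bound).filter (fun i => r.part i = t) := by
        rw [Finset.filter_filter]
        apply Finset.filter_congr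
        intro x _
        constructor
        · intro h; omega
        · intro h; omega
      have e2 : ((Finset.range r.bound).filter (fun i => t ≤ r.part i)).filter (fun i => ¬ r.part i = t)
          = (Finset.range r.bound).filter (fun i => t + 1 ≤ r.part i) := by
        rw [Finset.filter_filter]
        apply Finset.filter_congr
        intro x _
        constructor
        · intro h; omega
        · intro h; omega
      rw [e1, e2] at hsplit
      have hsum1 : ∑ i ∈ (Finset.range r.bound).filter (fun i => r.part i = t), r.part i
          = t * r.mult t := by
        unfold FunPartition.mult
        rw [Finset.sum_congr rfl (fun x hx => (Finset.mem_filter.mp hx).2)]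
        simp [Nat.mul_comm]
      have h2 := ih (t+1) (by omega) (by omega)
      have hpar : (t * r.mult t) % 2 = 0 := by
        rcases Nat.even_or_odd t with he|ho
        · have : t % 2 = 0 := Nat.even_iff.mp he
          have hmm := Nat.mul_mod t (r.mult t) 2
          rw [this] at hmm
          simpa using hmm
        · have hodd : t % 2 = 1 := Nat.odd_iff.mp ho
          have hmult : r.mult t % 2 = 0 := hr t ht (by omega)
          have hmm := Nat.mul_mod t (r.mult t) 2
          rw [hmult] at hmm
          simpa using hmm
      omega
    · have : (Finset.range r.bound).filter (fun i => t ≤ r.part i) = ∅ := by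
        apply Finset.filter_eq_empty_iff.2
        intro i _
        have : r.part i ≤ r.part 0 := r.antitone (Nat.zero_le i)
        omega
      rw [this]
      simp

lemma Ssum_height_even (r : FunPartition N) (hr : EvenMult 1 r) {t : ℕ} (ht : 1 ≤ t) :
    Ssum r (r.height t) % 2 = 0 := by
  have hmax : max t 1 = t := by omega
  have hfe : (Finset.range r.bound).filter (fun j => max t 1 ≤ r.part j) = Finset.range (r.height t) :=
    height_filter r t
  rw [hmax] at hfe
  have := sum_filter_even_aux r hr (r.part 0 + 1) t ht (by omega)
  rw [hfe] at this
  exact this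

end SPAux
namespace SPAux
open Finset FunPartition

variable {M N : ℕ}

/-- The decrement function in the explicit formula for the type-C collapse. -/
def dlt (ν : FunPartition N) (k : ℕ) : ℕ :=
  if Ssum ν k % 2 = 1 ∧ ¬(ν.part (k-1) = ν.part k ∧ ν.part k % 2 = 1) then 1 else 0

/-- Partial sums of the type-C collapse of `ν`. -/
def Tf (ν : FunPartition N) (k : ℕ) : ℕ := Ssum ν k - dlt ν k

lemma dlt_le_one (ν : FunPartition N) (k : ℕ) : dlt ν k ≤ 1 := by
  unfold dlt; split_ifs <;> omega

lemma dlt_le_Ssum (ν : FunPartition N) (k : ℕ) : dlt ν k ≤ Ssum ν k := by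
  unfold dlt; split_ifs with h
  · omega
  · omega

lemma dlt_eq_zero_of_even (ν : FunPartition N) {k : ℕ} (h : Ssum ν k % 2 = 0) : dlt ν k = 0 := by
  unfold dlt; split_ifs with h' <;> omega

lemma dlt_eq_one_of (ν : FunPartition N) {k : ℕ} (h1 : Ssum ν k % 2 = 1)
    (h2 : ¬(ν.part (k-1) = ν.part k ∧ ν.part k % 2 = 1)) : dlt ν k = 1 := by
  unfold dlt
  rw [if_pos ⟨h1, h2⟩]

lemma eq_odd_of_dlt_eq_zero (ν : FunPartition N) {k : ℕ} (h : dlt ν k = 0)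
    (hodd : Ssum ν k % 2 = 1) : ν.part (k-1) = ν.part k ∧ ν.part k % 2 = 1 := by
  by_contra hc
  have := dlt_eq_one_of ν hodd hc
  omega

lemma dlt_zero (ν : FunPartition N) : dlt ν 0 = 0 :=
  dlt_eq_zero_of_even ν (by simp [Ssum_zero])

lemma Tf_zero (ν : FunPartition N) : Tf ν 0 = 0 := by
  unfold Tf
  rw [dlt_zero, Ssum_zero]

lemma Tf_le_Ssum (ν : FunPartition N) (k : ℕ) : Tf ν k ≤ Ssum ν k :=
  Nat.sub_le _ _

lemma Ssum_le_Tf_add_one (ν : FunPartition N) (k : ℕ) : Ssum ν k ≤ Tf ν k + 1 := by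
  have := dlt_le_one ν k
  have := dlt_le_Ssum ν k
  unfold Tf
  omega

/-- Sum over a constant block. -/
lemma Ssum_block (r : FunPartition N) {i0 k a : ℕ} (h0 : i0 ≤ k)
    (hconst : ∀ i, i0 ≤ i → i < k → r.part i = a) :
    Ssum r k = Ssum r i0 + (k - i0) * a := by
  unfold Ssum
  rw [Finset.range_eq_Ico, ← Finset.sum_Ico_consecutive _ (Nat.zero_le i0) h0]
  have : ∑ i ∈ Finset.Ico i0 k, r.part i = (k - i0) * a := by
    rw [Finset.sum_congr rfl (fun i hi => hconst i (Finset.mem_Ico.mp hi).1 (Finset.mem_Ico.mp hi).2)]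
    simp [Nat.card_Ico]
  rw [this, ← Finset.range_eq_Ico]

/-- Upper bound: every type-C partition dominated by `ν` has partial sums at most `Tf ν`. -/
lemma Ssum_le_Tf {ν r : FunPartition N} (hr : EvenMult 1 r) (hdom : Dominates ν r) (k : ℕ) :
    Ssum r k ≤ Tf ν k := by
  have h1 : Ssum r k ≤ Ssum ν k := hdom k
  have hd1 := dlt_le_one ν k
  rcases Nat.eq_zero_or_pos (dlt ν k) with hd|hd
  · unfold Tf; omega
  · have hd' : dlt ν k = 1 := by omega
    have hspec : Ssum ν k % 2 = 1 ∧ ¬(ν.part (k-1) = ν.part k ∧ ν.part k % 2 = 1) := by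
      unfold dlt at hd'
      by_cases hcond : Ssum ν k % 2 = 1 ∧ ¬(ν.part (k-1) = ν.part k ∧ ν.part k % 2 = 1)
      · exact hcond
      · rw [if_neg hcond] at hd'
        omega
    rcases hspec with ⟨hodd, hne⟩
    -- suffices to show Ssum r k ≠ Ssum ν k
    have hneq : Ssum r k ≠ Ssum ν k := by
      intro heq
      have hk : 1 ≤ k := by
        rcases Nat.eq_zero_or_pos k with h|h
        · rw [h] at hodd; rw [Ssum_zero] at hodd; omega
        · exact h
      set a := r.part k with ha
      have hchar : ∀ i, a + 1 ≤ r.part i ↔ i < r.height (a+1) :=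
        fun i => le_part_iff r (by omega) i
      set i0 := r.height (a+1) with hi0
      have hi0k : i0 ≤ k := by
        have := hchar k
        omega
      have hsum0 : Ssum r i0 % 2 = 0 := Ssum_height_even r hr (by omega)
      have hconst : ∀ i, i0 ≤ i → i < k → r.part i = a := by
        intro i hge hlt
        have hle : r.part i ≤ a := by
          have := hchar i
          omega
        have hgea : a ≤ r.part i := r.antitone (le_of_lt hlt)
        omega
      have hblock : Ssum r k = Ssum r i0 + (k - i0) * a := Ssum_block r hi0k hconst
      have hrodd : Ssum r k % 2 = 1 := by rw [heq]; exact hodd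
      have haodd : a % 2 = 1 := by
        rcases Nat.mod_two_eq_zero_or_one a with hz|ho
        · exfalso
          have hmm := Nat.mul_mod (k - i0) a 2
          rw [hz] at hmm
          simp at hmm
          omega
        · exact ho
      have hi0lt : i0 < k := by
        rcases Nat.eq_or_lt_of_le hi0k with he|hl
        · exfalso
          rw [he] at hsum0
          omega
        · exact hl
      have hrk1 : r.part (k-1) = a := hconst (k-1) (by omega) (by omega)
      have hs1 : Ssum r (k+1) ≤ Ssum ν (k+1) := hdom (k+1)
      have hs2 : Ssum r (k-1) ≤ Ssum ν (k-1) := hdom (k-1)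
      have e1 : Ssum r (k+1) = Ssum r k + a := Ssum_succ r k
      have e2 : Ssum ν (k+1) = Ssum ν k + ν.part k := Ssum_succ ν k
      have hk' : k - 1 + 1 = k := by omega
      have e3 := Ssum_succ r (k-1)
      rw [hk'] at e3
      have e4 := Ssum_succ ν (k-1)
      rw [hk'] at e4
      have hmono : ν.part k ≤ ν.part (k-1) := ν.antitone (by omega)
      exact hne ⟨by omega, by omega⟩
    unfold Tf
    omega

end SPAux
namespace SPAux
open Finset FunPartition

variable {M N : ℕ}

lemma dlt_one_spec (ν : FunPartition N) {k : ℕ} (h : dlt ν k = 1) :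
    Ssum ν k % 2 = 1 ∧ ¬(ν.part (k-1) = ν.part k ∧ ν.part k % 2 = 1) := by
  unfold dlt at h
  by_cases hcond : Ssum ν k % 2 = 1 ∧ ¬(ν.part (k-1) = ν.part k ∧ ν.part k % 2 = 1)
  · exact hcond
  · rw [if_neg hcond] at h
    omega

lemma dlt_cases (ν : FunPartition N) (k : ℕ) : dlt ν k = 0 ∨ dlt ν k = 1 := by
  have := dlt_le_one ν k
  omega

/-- The part function of the type-C collapse of `ν`. -/
def dpart (ν : FunPartition N) (k : ℕ) : ℕ := ν.part k + dlt ν k - dlt ν (k+1)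

lemma dpart_nonneg (ν : FunPartition N) (k : ℕ) : dlt ν (k+1) ≤ ν.part k + dlt ν k := by
  rcases dlt_cases ν (k+1) with h|h
  · omega
  · rcases dlt_one_spec ν h with ⟨hodd, _⟩
    by_contra hc
    push_neg at hc
    have hz : ν.part k = 0 ∧ dlt ν k = 0 := by
      have := dlt_le_one ν k
      omega
    have hsk : Ssum ν (k+1) = Ssum ν k + ν.part k := Ssum_succ ν k
    have hkodd : Ssum ν k % 2 = 1 := by omega
    have := eq_odd_of_dlt_eq_zero ν hz.2 hkodd
    omega

lemma Tf_succ (ν : FunPartition N) (k : ℕ) : Tf ν (k+1) = Tf ν k + dpart ν k := by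
  have h1 := dpart_nonneg ν k
  have h2 := dlt_le_Ssum ν k
  have h3 := Ssum_succ ν k
  have h4 := dlt_le_Ssum ν (k+1)
  unfold Tf dpart
  omega

lemma Ssum_dpart (ν : FunPartition N) (k : ℕ) :
    ∑ i ∈ Finset.range k, dpart ν i = Tf ν k := by
  induction k with
  | zero => simp [Tf_zero]
  | succ k ih =>
    rw [Finset.sum_range_succ, ih, ← Tf_succ]

lemma dlt_of_bound_le (ν : FunPartition N) (hN : N % 2 = 0) {k : ℕ} (h : ν.bound ≤ k) :
    dlt ν k = 0 := by
  apply dlt_eq_zero_of_even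
  rw [Ssum_of_bound_le ν h]
  omega

lemma dpart_zero_of_ge_bound (ν : FunPartition N) (hN : N % 2 = 0) {k : ℕ} (h : ν.bound ≤ k) :
    dpart ν k = 0 := by
  unfold dpart
  rw [dlt_of_bound_le ν hN h, dlt_of_bound_le ν hN (by omega), ν.bound_zero k h]

lemma dpart_antitone_succ (ν : FunPartition N) (k : ℕ) : dpart ν (k+1) ≤ dpart ν k := by
  have hD1 := dpart_nonneg ν k
  have hD2 := dpart_nonneg ν (k+1)
  have hmono : ν.part (k+1) ≤ ν.part k := ν.antitone (by omega)
  have hs1 := Ssum_succ ν k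
  have hs2 := Ssum_succ ν (k+1)
  unfold dpart
  rcases dlt_cases ν (k+1) with h1|h1
  · have := dlt_le_one ν (k+1+1)
    have := dlt_le_one ν k
    omega
  · rcases dlt_one_spec ν h1 with ⟨hodd, hne⟩
    simp only [Nat.add_sub_cancel] at hne
    -- hne : ¬(ν.part k = ν.part (k+1) ∧ ν.part (k+1) % 2 = 1)
    rcases Nat.lt_or_ge (ν.part k) (ν.part (k+1) + 2) with hclose|hfar
    · -- ν.part k = ν.part (k+1) or ν.part (k+1) + 1
      have hB : ν.part k % 2 = 0 → dlt ν k = 1 := by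
        intro hke
        apply dlt_eq_one_of
        · omega
        · rintro ⟨_, hcontra⟩
          omega
      have hA : ν.part (k+1) % 2 = 0 → dlt ν (k+1+1) = 1 := by
        intro hke
        apply dlt_eq_one_of
        · omega
        · simp only [Nat.add_sub_cancel]
          rintro ⟨heq, hcontra⟩
          omega
      rcases Nat.eq_or_lt_of_le hmono with heq|hlt
      · -- equal parts: both even
        have heven : ν.part (k+1) % 2 = 0 := by
          rcases Nat.mod_two_eq_zero_or_one (ν.part (k+1)) with h|h
          · exact h
          · exact absurd ⟨heq.symm, h⟩ hne
        have := hA heven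
        have := hB (by omega)
        omega
      · -- ν.part k = ν.part (k+1) + 1
        rcases Nat.mod_two_eq_zero_or_one (ν.part (k+1)) with h|h
        · have := hA h
          have := dlt_le_one ν k
          omega
        · have := hB (by omega)
          have := dlt_le_one ν (k+1+1)
          omega
    · have := dlt_le_one ν (k+1+1)
      have := dlt_le_one ν k
      omega

/-- The type-C collapse of `ν`, built from the explicit formula. -/
def cPart (ν : FunPartition N) (hN : N % 2 = 0) : FunPartition N where
  part := dpart ν
  antitone := by
    have h : Antitone (dpart ν) := antitone_nat_of_succ_le (dpart_antitone_succ ν)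
    intro i j hij
    exact h hij
  bound := ν.bound
  bound_zero := fun i hi => dpart_zero_of_ge_bound ν hN hi
  sum_parts := by
    rw [Ssum_dpart]
    unfold Tf
    rw [Ssum_of_bound_le ν le_rfl, dlt_of_bound_le ν hN le_rfl]
    omega

lemma Ssum_cPart (ν : FunPartition N) (hN : N % 2 = 0) (k : ℕ) :
    Ssum (cPart ν hN) k = Tf ν k := Ssum_dpart ν k

lemma cPart_part (ν : FunPartition N) (hN : N % 2 = 0) (k : ℕ) :
    (cPart ν hN).part k = dpart ν k := rfl

/-- Corner property: at any strict descent of the collapse, the partial sum is even. -/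
lemma corner_Tf (ν : FunPartition N) (j : ℕ) (h : dpart ν (j+1) < dpart ν j) :
    Tf ν (j+1) % 2 = 0 := by
  rcases dlt_cases ν (j+1) with hd|hd
  · rcases Nat.mod_two_eq_zero_or_one (Ssum ν (j+1)) with hs|hs
    · unfold Tf; omega
    · have hspec := eq_odd_of_dlt_eq_zero ν hd hs
      simp only [Nat.add_sub_cancel] at hspec
      rcases hspec with ⟨heq, hoddp⟩
      have hs1 := Ssum_succ ν j
      have hs2 := Ssum_succ ν (j+1)
      have hdj : dlt ν j = 0 := dlt_eq_zero_of_even ν (by omega)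
      have hdk1 : dlt ν (j+1+1) = 0 := dlt_eq_zero_of_even ν (by omega)
      exfalso
      unfold dpart at h
      rw [hdj, hdk1, hd] at h
      omega
  · rcases dlt_one_spec ν hd with ⟨hodd, _⟩
    unfold Tf
    omega

/-- The collapse has even multiplicity of odd parts. -/
lemma cPart_evenMult (ν : FunPartition N) (hN : N % 2 = 0) : EvenMult 1 (cPart ν hN) := by
  intro s hs hsodd
  set c := cPart ν hN with hc
  set j2 := c.height s with hj2
  set j1 := c.height (s+1) with hj1
  have hj : j1 ≤ j2 := height_mono c (by omega) (by omega)
  have hm : c.height s = c.mult s + c.height (s+1) := height_eq_mult_add c hs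
  rcases Nat.eq_or_lt_of_le hj with he|hl
  · rw [← hj1, ← hj2, ← he] at hm
    omega
  · -- j1 < j2
    have hT2 : Tf ν j2 % 2 = 0 := by
      have hcorner : c.part j2 < c.part (j2 - 1) := by
        have h1 : s ≤ c.part (j2 - 1) := (le_part_iff c hs _).2 (by omega)
        have h2 : ¬ (s ≤ c.part j2) := by
          rw [le_part_iff c hs]
          omega
        omega
      have hkj : j2 - 1 + 1 = j2 := by omega
      have e1 : c.part j2 = dpart ν j2 := rfl
      have e2 : c.part (j2-1) = dpart ν (j2-1) := rfl
      have hdp : dpart ν (j2 - 1 + 1) < dpart ν (j2 - 1) := by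
        rw [hkj]
        omega
      have := corner_Tf ν (j2-1) hdp
      rw [hkj] at this
      exact this
    have hT1 : Tf ν j1 % 2 = 0 := by
      rcases Nat.eq_zero_or_pos j1 with hz|hpos
      · rw [hz, Tf_zero]
      · have hcorner : c.part j1 < c.part (j1 - 1) := by
          have h1 : s + 1 ≤ c.part (j1 - 1) := (le_part_iff c (by omega) _).2 (by omega)
          have h2 : ¬ (s + 1 ≤ c.part j1) := by
            rw [le_part_iff c (by omega)]
            omega
          omega
        have hkj : j1 - 1 + 1 = j1 := by omega
        have e1 : c.part j1 = dpart ν j1 := rfl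
        have e2 : c.part (j1-1) = dpart ν (j1-1) := rfl
        have hdp : dpart ν (j1 - 1 + 1) < dpart ν (j1 - 1) := by
          rw [hkj]
          omega
        have := corner_Tf ν (j1-1) hdp
        rw [hkj] at this
        exact this
    have hblock : Ssum c j2 = Ssum c j1 + (j2 - j1) * s := by
      apply Ssum_block c hj
      intro i hge hlt
      have h1 : s ≤ c.part i := (le_part_iff c hs _).2 (by omega)
      have h2 : ¬ (s + 1 ≤ c.part i) := by
        rw [le_part_iff c (by omega)]
        omega
      omega
    rw [Ssum_cPart, Ssum_cPart] at hblock
    have hmul : ((j2 - j1) * s) % 2 = ((j2 - j1) % 2) * (s % 2) % 2 := Nat.mul_mod _ _ _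
    rw [hsodd] at hmul
    have hmultc : c.mult s = j2 - j1 := by omega
    rw [hmultc]
    omega

/-- A type-1 collapse of `ν` has partial sums given by the explicit formula `Tf`. -/
lemma collapse_Ssum {ν q : FunPartition N} (hN : N % 2 = 0) (hcol : IsCollapse 1 ν q) (k : ℕ) :
    Ssum q k = Tf ν k := by
  obtain ⟨hev, hdom, hmax⟩ := hcol
  have hub : Ssum q k ≤ Tf ν k := Ssum_le_Tf hev hdom k
  have hdomc : Dominates ν (cPart ν hN) := by
    intro k'
    have h1 : Ssum (cPart ν hN) k' = Tf ν k' := Ssum_cPart ν hN k'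
    have h2 : Tf ν k' ≤ Ssum ν k' := Tf_le_Ssum ν k'
    show Ssum (cPart ν hN) k' ≤ Ssum ν k'
    omega
  have hlb : Ssum (cPart ν hN) k ≤ Ssum q k := hmax (cPart ν hN) (cPart_evenMult ν hN) hdomc k
  have h3 : Ssum (cPart ν hN) k = Tf ν k := Ssum_cPart ν hN k
  omega

end SPAux
namespace SPAux
open Finset FunPartition

variable {M N : ℕ}

lemma height_one_pos (p : FunPartition N) (hN : 1 ≤ N) : 1 ≤ p.height 1 := by
  by_contra hc
  push_neg at hc
  have : Ssum p 0 = N := Ssum_of_height_le p (by omega)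
  rw [Ssum_zero] at this
  omega

lemma minus_part_eq (P : FunPartition M) (Q : FunPartition N) (hm : IsMinus P Q)
    (h1 : 1 ≤ P.height 0) {i : ℕ} (hi : i ≠ P.height 0 - 1) : Q.part i = P.part i :=
  hm.1 i (by omega)

lemma minus_Ssum_lt (P : FunPartition M) (Q : FunPartition N) (hm : IsMinus P Q)
    (h1 : 1 ≤ P.height 0) {k : ℕ} (hk : k ≤ P.height 0 - 1) : Ssum Q k = Ssum P k := by
  unfold Ssum
  apply Finset.sum_congr rfl
  intro i hi
  have := Finset.mem_range.mp hi
  exact minus_part_eq P Q hm h1 (by omega)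

lemma minus_Ssum_ge (P : FunPartition M) (Q : FunPartition N) (hm : IsMinus P Q)
    (h1 : 1 ≤ P.height 0) {k : ℕ} (hk : P.height 0 ≤ k) : Ssum Q k + 1 = Ssum P k := by
  set h0 := P.height 0 with hh0
  have hm1 : 1 ≤ P.part (h0 - 1) := by
    have := (le_part_iff P le_rfl (h0 - 1)).2
    rw [← height_zero] at this
    exact this (by omega)
  have hbase : Ssum Q h0 + 1 = Ssum P h0 := by
    have hk' : h0 - 1 + 1 = h0 := by omega
    have e1 := Ssum_succ Q (h0 - 1)
    have e2 := Ssum_succ P (h0 - 1)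
    rw [hk'] at e1 e2
    have e3 : Ssum Q (h0 - 1) = Ssum P (h0 - 1) := minus_Ssum_lt P Q hm h1 le_rfl
    have e4 : Q.part (h0 - 1) = P.part (h0 - 1) - 1 := hm.2
    omega
  have hzP : ∀ i, h0 ≤ i → P.part i = 0 := by
    intro i hi
    apply part_eq_zero_of_height_le P
    rw [← height_zero]
    omega
  have hzQ : ∀ i, h0 ≤ i → Q.part i = 0 := by
    intro i hi
    rw [minus_part_eq P Q hm h1 (by omega)]
    exact hzP i hi
  have s1 : Ssum Q k = Ssum Q h0 := Ssum_stable Q hzQ hk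
  have s2 : Ssum P k = Ssum P h0 := Ssum_stable P hzP hk
  omega

lemma minus_Ssum_le (P : FunPartition M) (Q : FunPartition N) (hm : IsMinus P Q)
    (h1 : 1 ≤ P.height 0) (k : ℕ) : Ssum Q k ≤ Ssum P k := by
  rcases le_or_gt (P.height 0) k with h|h
  · have := minus_Ssum_ge P Q hm h1 h
    omega
  · have := minus_Ssum_lt P Q hm h1 (k := k) (by omega)
    omega

/-- The transpose of a partition, as a partition. -/
def transposePartition (q : FunPartition N) : FunPartition N where
  part := transposeFun q
  antitone := by
    intro i j hij
    unfold FunPartition.transposeFun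
    apply Finset.card_le_card
    intro x hx
    simp only [Finset.mem_filter, Finset.mem_range] at hx ⊢
    omega
  bound := q.part 0
  bound_zero := by
    intro i hi
    unfold FunPartition.transposeFun
    rw [Finset.card_eq_zero, Finset.filter_eq_empty_iff]
    intro j _
    have : q.part j ≤ q.part 0 := q.antitone (Nat.zero_le j)
    omega
  sum_parts := by
    have h := Ssum_transposeFun q (q.part 0)
    have h2 : ∀ j ∈ Finset.range q.bound, min (q.part j) (q.part 0) = q.part j := by
      intro j _
      have : q.part j ≤ q.part 0 := q.antitone (Nat.zero_le j)
      omega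
    rw [Finset.sum_congr rfl h2] at h
    rw [h]
    exact q.sum_parts

lemma transposePartition_part (q : FunPartition N) (i : ℕ) :
    (transposePartition q).part i = transposeFun q i := rfl

lemma Ssum_transposePartition (q : FunPartition N) (k : ℕ) :
    Ssum (transposePartition q) k = ∑ j ∈ Finset.range q.bound, min (q.part j) k :=
  Ssum_transposeFun q k

lemma height_transposePartition (q : FunPartition N) {t : ℕ} (ht : 1 ≤ t) :
    (transposePartition q).height t = q.part (t-1) := by
  have key : ∀ i, t ≤ (transposePartition q).part i ↔ i + 1 ≤ q.part (t-1) := by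
    intro i
    rw [transposePartition_part, transposeFun_eq_height]
    have e1 : (i + 1 ≤ q.part (t-1)) ↔ (t - 1 < q.height (i+1)) := le_part_iff q (by omega) (t-1)
    constructor
    · intro h
      exact e1.2 (by omega)
    · intro h
      have := e1.1 h
      omega
  have k1 : ∀ i, i < (transposePartition q).height t ↔ i < q.part (t-1) := by
    intro i
    rw [← le_part_iff (transposePartition q) ht i]
    have := key i
    omega
  have h1 := k1 ((transposePartition q).height t)
  have h2 := k1 (q.part (t-1))
  omega

end SPAux
namespace SPAux
open Finset FunPartition

variable {M N : ℕ}

lemma prefix_parity (p : FunPartition N) (hEM : EvenMult 0 p) (k : ℕ) :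
    (Ssum p k + k + (if p.part k % 2 = 0 then k - p.height (p.part k + 1) else 0)) % 2 = 0 := by
  have h1 := Ssum_parity p k
  have h2 := card_even_odd p k
  have h3 := even_cnt_prefix p hEM k
  omega

lemma mul_mod_odd (k k' : ℕ) (h : k % 2 = 1) : (k * k') % 2 = k' % 2 := by
  have hmm := Nat.mul_mod k k' 2
  rw [h] at hmm
  omega

lemma odd_of_mul_odd {k k' : ℕ} (h : (k * k') % 2 = 1) : k % 2 = 1 ∧ k' % 2 = 1 := by
  have hmm := Nat.mul_mod k k' 2
  rcases Nat.mod_two_eq_zero_or_one k with h1|h1 <;>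
    rcases Nat.mod_two_eq_zero_or_one k' with h2|h2 <;>
      rw [h1, h2] at hmm <;> omega

lemma Tf_even_at_even (p : FunPartition M) (pm : FunPartition N)
    (hEM : EvenMult 0 p) (hpmm : IsMinus p pm) (h1 : 1 ≤ p.height 0) (i : ℕ) :
    Tf pm (2*i) % 2 = 0 := by
  rcases Nat.mod_two_eq_zero_or_one (Ssum pm (2*i)) with hs|hs
  · unfold Tf
    rw [dlt_eq_zero_of_even pm hs]
    omega
  · have hipos : 1 ≤ i := by
      rcases Nat.eq_zero_or_pos i with hz|hz
      · subst hz
        norm_num [Ssum] at hs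
      · exact hz
    have hd : dlt pm (2*i) = 1 := by
      apply dlt_eq_one_of pm hs
      rintro ⟨heq, hodd⟩
      have hklt : 2*i ≤ p.height 0 - 1 := by
        by_contra hc
        push_neg at hc
        have hz : pm.part (2*i) = 0 := by
          rw [minus_part_eq p pm hpmm h1 (by omega)]
          apply part_eq_zero_of_height_le p
          rw [← height_zero]
          omega
        omega
      have hkne : 2*i ≠ p.height 0 - 1 := by
        intro hceq
        have e1 : pm.part (2*i) = p.part (2*i) - 1 := by
          rw [hceq]
          exact hpmm.2
        have e2 : pm.part (2*i - 1) = p.part (2*i - 1) :=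
          minus_part_eq p pm hpmm h1 (by omega)
        have e3 : p.part (2*i) ≤ p.part (2*i - 1) := p.antitone (by omega)
        omega
      have e1 : pm.part (2*i) = p.part (2*i) := minus_part_eq p pm hpmm h1 hkne
      have e2 : pm.part (2*i - 1) = p.part (2*i - 1) :=
        minus_part_eq p pm hpmm h1 (by omega)
      have e3 : Ssum pm (2*i) = Ssum p (2*i) := minus_Ssum_lt p pm hpmm h1 hklt
      have hpp := prefix_parity p hEM (2*i)
      rw [if_neg (by omega : ¬ (p.part (2*i) % 2 = 0))] at hpp
      omega
    unfold Tf
    omega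

end SPAux

/-- `d ∘ f = f ∘ d` as maps `P^{sp}_B(2n+1) → P^{sp}_C(2n)`:
for `p ∈ P^{sp}_B(2n+1)`, `((p⁻)_C)* = (((p*)⁻))_C`. -/
theorem transpose_comm_fBC (n : ℕ) (p pt : FunPartition (2 * n + 1))
    (q q2 : FunPartition (2 * n))
    (hp : FunPartition.SpecialCond 0 1 p)
    (hq : FunPartition.IsFBC n p q)
    (hpt : pt.part = FunPartition.transposeFun p)
    (hq2 : FunPartition.IsFBC n pt q2) :
    FunPartition.transposeFun q = q2.part := by
  classical
  open SPAux FunPartition Finset in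
  obtain ⟨pm, hpmm, hpmc⟩ := hq
  obtain ⟨ptm, hptmm, hptmc⟩ := hq2
  have hEM : FunPartition.EvenMult 0 p := hp.1
  have hNeven : (2*n) % 2 = 0 := by omega
  -- basic facts about p
  have h0pos : 1 ≤ p.height 0 := by
    rw [height_zero]
    exact height_one_pos p (by omega)
  have hp0pos : 1 ≤ p.part 0 := by
    have h := le_part_iff p (t := 1) le_rfl 0
    rw [← height_zero] at h
    exact h.2 (by omega)
  have hbound0 : 0 < p.bound := part_lt_bound p hp0pos
  -- pt facts
  have hptpart : ∀ i, pt.part i = p.height (i+1) := by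
    intro i
    rw [hpt]
    exact transposeFun_eq_height p i
  have hptp1 : ∀ i, 1 ≤ pt.part i ↔ i < p.part 0 := by
    intro i
    rw [hptpart i]
    have e1 := le_part_iff p (t := i+1) (by omega) 0
    omega
  have hpth0 : pt.height 0 = p.part 0 := by
    rw [height_zero]
    have k1 : ∀ i, i < pt.height 1 ↔ i < p.part 0 := by
      intro i
      rw [← le_part_iff pt le_rfl i]
      exact hptp1 i
    have h1 := k1 (pt.height 1)
    have h2 := k1 (p.part 0)
    omega
  have h1pt : 1 ≤ pt.height 0 := by
    rw [hpth0]
    exact hp0pos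
  have hSpt : ∀ k, Ssum pt k = ∑ j ∈ Finset.range p.bound, min (p.part j) k := by
    intro k
    have e : Ssum pt k = ∑ i ∈ Finset.range k, FunPartition.transposeFun p i := by
      unfold SPAux.Ssum
      exact Finset.sum_congr rfl (fun i _ => by rw [hpt])
    rw [e, Ssum_transposeFun]
  have hpt_total : ∀ k, p.part 0 ≤ k → Ssum pt k = 2*n+1 := by
    intro k hk
    rw [hSpt k]
    have h2 : ∀ j ∈ Finset.range p.bound, min (p.part j) k = p.part j := by
      intro j _
      have : p.part j ≤ p.part 0 := p.antitone (Nat.zero_le j)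
      omega
    rw [Finset.sum_congr rfl h2]
    exact p.sum_parts
  -- q facts
  have hSq : ∀ k, Ssum q k = Tf pm k := collapse_Ssum hNeven hpmc
  have hTeven : ∀ i, Tf pm (2*i) % 2 = 0 := Tf_even_at_even p pm hEM hpmm h0pos
  have hq0 : q.part 0 ≤ p.part 0 := by
    have e1 : Ssum q 1 = Ssum q 0 + q.part 0 := Ssum_succ q 0
    have e0 : Ssum q 0 = 0 := Ssum_zero q
    have e2 : Ssum pm 1 = Ssum pm 0 + pm.part 0 := Ssum_succ pm 0
    have e0' : Ssum pm 0 = 0 := Ssum_zero pm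
    have t1 := hSq 1
    have t2 := Tf_le_Ssum pm 1
    have hpm0 : pm.part 0 ≤ p.part 0 := by
      by_cases hc : (0 : ℕ) = p.height 0 - 1
      · have h2 := hpmm.2
        rw [← hc] at h2
        omega
      · have := minus_part_eq p pm hpmm h0pos hc
        omega
    omega
  -- the transpose of q
  set qT := SPAux.transposePartition q with hqTdef
  have hSqT : ∀ k, Ssum qT k = ∑ j ∈ Finset.range q.bound, min (q.part j) k :=
    Ssum_transposePartition q
  have hqT_total : ∀ k, p.part 0 ≤ k → Ssum qT k = 2*n := by
    intro k hk
    rw [hSqT k]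
    have h2 : ∀ j ∈ Finset.range q.bound, min (q.part j) k = q.part j := by
      intro j _
      have : q.part j ≤ q.part 0 := q.antitone (Nat.zero_le j)
      omega
    rw [Finset.sum_congr rfl h2]
    exact q.sum_parts
  -- (a) qT has even multiplicity of odd parts
  have hqTev : FunPartition.EvenMult 1 qT := by
    intro s hs hsodd
    have hsodd' : s % 2 = 1 := by omega
    obtain ⟨s', rfl⟩ : ∃ s', s = s' + 1 := ⟨s - 1, by omega⟩
    have hght : qT.height (s'+1) = q.part s' := by
      have h := height_transposePartition q (t := s'+1) (by omega)
      simpa using h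
    have hght2 : qT.height (s'+1+1) = q.part (s'+1) := by
      have h := height_transposePartition q (t := s'+1+1) (by omega)
      simpa using h
    have hmult := height_eq_mult_add qT (s := s'+1) (by omega)
    rw [hght, hght2] at hmult
    have e1 := Ssum_succ q s'
    have e2 := Ssum_succ q (s'+1)
    have t0 := hSq s'
    have t1 := hSq (s'+1)
    have t2 := hSq (s'+1+1)
    have hv0 : Tf pm s' % 2 = 0 := by
      obtain ⟨i, hi⟩ : ∃ i, s' = 2*i := ⟨s'/2, by omega⟩
      rw [hi]
      exact hTeven i
    have hv2 : Tf pm (s'+1+1) % 2 = 0 := by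
      obtain ⟨i2, hi2⟩ : ∃ i2, s'+1+1 = 2*i2 := ⟨(s'+2)/2, by omega⟩
      rw [hi2]
      exact hTeven i2
    omega
  -- (b) qT is dominated by ptm
  have hqTdom : FunPartition.Dominates ptm qT := by
    intro k
    show Ssum qT k ≤ Ssum ptm k
    rcases le_or_gt (p.part 0) k with hk|hk
    · have hA : Ssum ptm k + 1 = Ssum pt k :=
        minus_Ssum_ge pt ptm hptmm h1pt (by rw [hpth0]; omega)
      have hB := hpt_total k hk
      have hC := hqT_total k hk
      omega
    · have hA : Ssum ptm k = Ssum pt k :=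
        minus_Ssum_lt pt ptm hptmm h1pt (by rw [hpth0]; omega)
      have hB := hSpt k
      have h1 : Ssum qT k + Epos q k = 2*n := by
        rw [hSqT k]
        exact min_add_Epos q k
      have h2 : (∑ j ∈ Finset.range p.bound, min (p.part j) k) + Epos p k = 2*n+1 :=
        min_add_Epos p k
      have h3 : Epos p k + k * p.height (k+1) = Ssum p (p.height (k+1)) := Epos_eq p k
      have h4 : Ssum q (p.height (k+1)) ≤ Epos q k + k * (p.height (k+1)) := Epos_lb q k _
      have h5 : Ssum q (p.height (k+1)) = Tf pm (p.height (k+1)) := hSq _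
      have h6 : Ssum p (p.height (k+1)) ≤ Tf pm (p.height (k+1)) + 1 := by
        rcases le_or_gt (p.height 0) (p.height (k+1)) with hcase|hcase
        · have hle : p.height (k+1) ≤ p.height 0 := by
            rw [height_zero]
            exact height_mono p le_rfl (by omega)
          have e1 : Ssum pm (p.height (k+1)) + 1 = Ssum p (p.height (k+1)) :=
            minus_Ssum_ge p pm hpmm h0pos (by omega)
          have e2 : Ssum p (p.height (k+1)) = 2*n+1 := by
            apply Ssum_of_height_le p
            rw [← height_zero]
            omega
          have e3 : dlt pm (p.height (k+1)) = 0 := dlt_eq_zero_of_even pm (by omega)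
          have e4 := dlt_le_Ssum pm (p.height (k+1))
          unfold SPAux.Tf
          omega
        · have e1 : Ssum pm (p.height (k+1)) = Ssum p (p.height (k+1)) :=
            minus_Ssum_lt p pm hpmm h0pos (by omega)
          have e2 := Ssum_le_Tf_add_one pm (p.height (k+1))
          omega
      omega
  -- (c) lower bound for partial sums of qT
  have hLB : ∀ k, Tf ptm k ≤ Ssum qT k := by
    intro k
    rcases le_or_gt (p.part 0) k with hk|hk
    · have t1 := Tf_le_Ssum ptm k
      have t2 := Ssum_le_total ptm k
      have t3 := hqT_total k hk
      omega
    · rcases Nat.eq_zero_or_pos k with hk0|hkpos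
      · subst hk0
        rw [Tf_zero]
        exact Nat.zero_le _
      · -- 1 ≤ k < p0
        have hA : Ssum ptm k = Ssum pt k :=
          minus_Ssum_lt pt ptm hptmm h1pt (by rw [hpth0]; omega)
        have hB := hSpt k
        suffices hsuff : Ssum ptm k ≤ Ssum qT k + dlt ptm k by
          have := dlt_le_Ssum ptm k
          unfold SPAux.Tf
          omega
        obtain ⟨k', hk'⟩ : ∃ x, q.height (k+1) = x := ⟨_, rfl⟩
        have h1 : Ssum qT k + Epos q k = 2*n := by
          rw [hSqT k]
          exact min_add_Epos q k
        have h2 : (∑ j ∈ Finset.range p.bound, min (p.part j) k) + Epos p k = 2*n+1 :=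
          min_add_Epos p k
        have h3 : Epos q k + k * k' = Ssum q k' := by
          rw [← hk']
          exact Epos_eq q k
        have h4 : Ssum q k' = Tf pm k' := hSq k'
        have h5 : Ssum p k' ≤ Epos p k + k * k' := Epos_lb p k k'
        have h6 : Tf pm k' ≤ Ssum pm k' := Tf_le_Ssum pm k'
        have h7 : Ssum pm k' ≤ Ssum p k' := minus_Ssum_le p pm hpmm h0pos k'
        rcases dlt_cases ptm k with hdl|hdl
        · -- the hard case: dlt ptm k = 0
          rw [hdl]
          by_contra hc
          push_neg at hc
          have hE1 : Tf pm k' = Ssum pm k' := by omega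
          have hE2 : Ssum pm k' = Ssum p k' := by omega
          have hE3 : Ssum p k' = Epos p k + k * k' := by omega
          have hdpm : dlt pm k' = 0 := by
            have := dlt_le_Ssum pm k'
            unfold SPAux.Tf at hE1
            omega
          -- k' ≥ 1
          have hep : p.part 0 - k ≤ Epos p k := by
            have := Finset.single_le_sum (f := fun j => p.part j - k)
              (fun i _ => Nat.zero_le _) (Finset.mem_range.2 hbound0)
            exact this
          have hk'pos : 1 ≤ k' := by
            rcases Nat.eq_zero_or_pos k' with hz|hz
            · exfalso
              subst hz
              have hz0 : Ssum p 0 = 0 := Ssum_zero p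
              omega
            · exact hz
          -- p.part k' ≤ k
          have pkk : p.part k' ≤ k := by
            have w1 := Finset.sum_range_succ (fun j => p.part j - k) k'
            have w2 := Epos_ge p k (k'+1)
            have w3 := sum_sub_lb p k k'
            omega
          -- k ≤ p.part (k'-1)
          have pk1 : k ≤ p.part (k'-1) := by
            by_contra hcc
            push_neg at hcc
            have v1 := sum_sub_lb p k (k'-1)
            have v2 := Epos_ge p k (k'-1)
            have v3 := Ssum_succ p (k'-1)
            have hx : k * (k' - 1 + 1) = k * (k'-1) + k := Nat.mul_succ k (k'-1)
            have hkk : k' - 1 + 1 = k' := by omega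
            rw [hkk] at v3 hx
            omega
          -- k' ≤ p.height 0 - 1
          have k'h : k' ≤ p.height 0 - 1 := by
            rcases le_or_gt (p.height 0) k' with hcase|hcase
            · exfalso
              have := minus_Ssum_ge p pm hpmm h0pos hcase
              omega
            · omega
          -- height bounds
          have hk'hk : k' ≤ p.height k := by
            have := (le_part_iff p (t := k) (by omega) (k'-1)).1 pk1
            omega
          have hhk1k : p.height (k+1) ≤ k' := by
            by_contra hcc
            push_neg at hcc
            have := (le_part_iff p (t := k+1) (by omega) k').2 hcc
            omega
          have hHv : p.height (p.part k' + 1) ≤ k' := by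
            by_contra hcc
            push_neg at hcc
            have := (le_part_iff p (t := p.part k' + 1) (by omega) k').2 hcc
            omega
          have hpp := prefix_parity p hEM k'
          -- analyse dlt pm k' = 0
          rcases Nat.mod_two_eq_zero_or_one (Ssum pm k') with hqe|hqo
          · -- B2 : Ssum pm k' even
            have hspe : Ssum p k' % 2 = 0 := by omega
            rcases Nat.mod_two_eq_zero_or_one (Ssum ptm k) with hpe|hpo
            · -- B2a : Ssum ptm k even
              have hkk'odd : (k * k') % 2 = 1 := by omega
              obtain ⟨hkodd, hk'odd⟩ := odd_of_mul_odd hkk'odd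
              rcases Nat.mod_two_eq_zero_or_one (p.part k') with hve|hvo
              · rw [if_pos hve] at hpp
                have hvltk : p.part k' + 1 ≤ k := by omega
                have hm1 : p.height k ≤ p.height (p.part k' + 1) :=
                  height_mono p (by omega) hvltk
                omega
              · rw [if_neg (by omega)] at hpp
                omega
            · -- B2b : Ssum ptm k odd
              have heqptm := eq_odd_of_dlt_eq_zero ptm hdl hpo
              have hkp0 : k ≠ p.part 0 - 1 := by
                intro hceq
                have e1 : ptm.part k = pt.part k - 1 := by
                  rw [hceq]
                  have h2 := hptmm.2
                  rw [hpth0] at h2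
                  exact h2
                have e2 : ptm.part (k-1) = pt.part (k-1) :=
                  minus_part_eq pt ptm hptmm h1pt (by rw [hpth0]; omega)
                have e3 : pt.part k ≤ pt.part (k-1) := pt.antitone (by omega)
                have e4 : 1 ≤ pt.part k := (hptp1 k).2 (by omega)
                omega
              have hptk : ptm.part k = pt.part k :=
                minus_part_eq pt ptm hptmm h1pt (by rw [hpth0]; omega)
              have hptk1 : ptm.part (k-1) = pt.part (k-1) :=
                minus_part_eq pt ptm hptmm h1pt (by rw [hpth0]; omega)
              have g1 := hptpart k
              have g2 := hptpart (k-1)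
              have hkm1 : k - 1 + 1 = k := by omega
              rw [hkm1] at g2
              have hb : p.height k = p.height (k+1) := by omega
              have hk'odd : k' % 2 = 1 := by omega
              rcases Nat.mod_two_eq_zero_or_one (p.part k') with hve|hvo
              · rw [if_pos hve] at hpp
                have hvne : p.part k' ≠ k := by
                  intro hveq
                  have : k' < p.height k := (le_part_iff p (t := k) (by omega) k').1 (by omega)
                  omega
                have hm1 : p.height k ≤ p.height (p.part k' + 1) :=
                  height_mono p (by omega) (by omega)
                omega
              · rw [if_neg (by omega)] at hpp
                omega
          · -- B1 : Ssum pm k' odd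
            have heqpm := eq_odd_of_dlt_eq_zero pm hdpm hqo
            have hk'ne : k' ≠ p.height 0 - 1 := by
              intro hceq
              have e1 : pm.part k' = p.part k' - 1 := by
                rw [hceq]
                exact hpmm.2
              have e2 : pm.part (k'-1) = p.part (k'-1) :=
                minus_part_eq p pm hpmm h0pos (by omega)
              have e3 : p.part k' ≤ p.part (k'-1) := p.antitone (by omega)
              omega
            have e1 : pm.part k' = p.part k' := minus_part_eq p pm hpmm h0pos hk'ne
            have e2 : pm.part (k'-1) = p.part (k'-1) :=
              minus_part_eq p pm hpmm h0pos (by omega)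
            -- k = p.part k', odd
            have hkeq : k = p.part k' := by omega
            have hkodd : k % 2 = 1 := by omega
            have hppx : (Ssum p k' + k') % 2 = 0 := by
              rw [if_neg (by omega)] at hpp
              omega
            have hmulmod : (k * k') % 2 = k' % 2 := mul_mod_odd k k' hkodd
            rcases Nat.mod_two_eq_zero_or_one (Ssum ptm k) with hpe|hpo
            · omega
            · -- parts of ptm equal: contradiction via heights
              have heqptm := eq_odd_of_dlt_eq_zero ptm hdl hpo
              have hkp0 : k ≠ p.part 0 - 1 := by
                intro hceq
                have f1 : ptm.part k = pt.part k - 1 := by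
                  rw [hceq]
                  have h2 := hptmm.2
                  rw [hpth0] at h2
                  exact h2
                have f2 : ptm.part (k-1) = pt.part (k-1) :=
                  minus_part_eq pt ptm hptmm h1pt (by rw [hpth0]; omega)
                have f3 : pt.part k ≤ pt.part (k-1) := pt.antitone (by omega)
                have f4 : 1 ≤ pt.part k := (hptp1 k).2 (by omega)
                omega
              have hptk : ptm.part k = pt.part k :=
                minus_part_eq pt ptm hptmm h1pt (by rw [hpth0]; omega)
              have hptk1 : ptm.part (k-1) = pt.part (k-1) :=
                minus_part_eq pt ptm hptmm h1pt (by rw [hpth0]; omega)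
              have g1 := hptpart k
              have g2 := hptpart (k-1)
              have hkm1 : k - 1 + 1 = k := by omega
              rw [hkm1] at g2
              have hb : p.height k = p.height (k+1) := by omega
              have hlt : k' < p.height k :=
                (le_part_iff p (t := k) (by omega) k').1 (by omega)
              omega
        · omega
  -- assemble: Ssum qT = Ssum q2
  have hfin : ∀ k, Ssum qT k = Ssum q2 k := by
    intro k
    have hx1 : Ssum qT k ≤ Ssum q2 k := hptmc.2.2 qT hqTev hqTdom k
    have hx2 : Ssum q2 k ≤ Tf ptm k := Ssum_le_Tf hptmc.1 hptmc.2.1 k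
    have hx3 := hLB k
    omega
  funext i
  have e1 := Ssum_succ qT i
  have e2 := Ssum_succ q2 i
  have f1 := hfin i
  have f2 := hfin (i+1)
  have hpart : qT.part i = q2.part i := by omega
  rw [← transposePartition_part q i]
  exact hpart
end

section
/- The Lusztig–Spaltenstein duality d_{LS} = d ∘ f is an order-reversing involution-like pairing: for types B and C, d_{LS}: P^{sp}_B(2n+1) → P^{sp}_C(2n) and d_{LS}: P^{sp}_C(2n) → P^{sp}_B(2n+1) are mutually inverse order-reversing bijections. -/
/-- A partition of `N`: a weakly decreasing function `ℕ → ℕ` (0-indexed parts,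
eventually zero) whose sum is `N`. -/
structure NatPartition (N : ℕ) where
  part : ℕ → ℕ
  antitone : ∀ ⦃i j : ℕ⦄, i ≤ j → part j ≤ part i
  bound : ℕ
  bound_zero : ∀ i, bound ≤ i → part i = 0
  sum_parts : ∑ i ∈ Finset.range bound, part i = N

namespace NatPartition

variable {M N : ℕ}

/-- Multiplicity of the part `s` in `p` (intended for `s ≥ 1`). -/
def mult (p : NatPartition N) (s : ℕ) : ℕ :=
  ((Finset.range p.bound).filter (fun j => p.part j = s)).card

/-- Height `h_p(s) = #{j : p_j ≥ s}`, with the convention that `height p 0`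
is the number of (positive) parts of `p`. -/
def height (p : NatPartition N) (s : ℕ) : ℕ :=
  ((Finset.range p.bound).filter (fun j => max s 1 ≤ p.part j)).card

/-- `Dominates lam mu` means `mu ⪯ lam` in the dominance order. -/
def Dominates (lam mu : NatPartition N) : Prop :=
  ∀ k : ℕ, ∑ i ∈ Finset.range k, mu.part i ≤ ∑ i ∈ Finset.range k, lam.part i

/-- The transpose (conjugate) part function: `(p*)_i = #{j : p_j ≥ i+1}` (0-indexed). -/
def transposeFun (p : NatPartition N) : ℕ → ℕ :=
  fun i => ((Finset.range p.bound).filter (fun j => i + 1 ≤ p.part j)).card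

/-- Every (positive) part congruent to `ε` mod 2 has even multiplicity. -/
def EvenMult (ε : ℕ) (p : NatPartition N) : Prop :=
  ∀ s, 1 ≤ s → s % 2 = ε % 2 → mult p s % 2 = 0

/-- Membership in `P_{ε,ε'}(N)`: parts `≡ ε (mod 2)` have even multiplicity and
height `≡ ε' (mod 2)`, including the convention at `s = 0` (whose height is the
number of parts) when `ε = 0`. -/
def SpecialCond (ε ε' : ℕ) (p : NatPartition N) : Prop :=
  EvenMult ε p ∧
  (∀ s, 1 ≤ s → mult p s ≠ 0 → s % 2 = ε % 2 → height p s % 2 = ε' % 2) ∧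
  (ε = 0 → height p 0 % 2 = ε' % 2)

/-- `q` is the `ε`-collapse of `p`: the dominance-greatest partition dominated by `p`
all of whose parts `≡ ε (mod 2)` have even multiplicity. -/
def IsCollapse (ε : ℕ) (p q : NatPartition N) : Prop :=
  EvenMult ε q ∧ Dominates p q ∧
    ∀ r : NatPartition N, EvenMult ε r → Dominates p r → Dominates q r

/-- `q = p⁻`: decrease the smallest (positive) part of `p` by one. -/
def IsMinus (p : NatPartition M) (q : NatPartition N) : Prop :=
  (∀ i, i + 1 ≠ height p 0 → q.part i = p.part i) ∧
  q.part (height p 0 - 1) = p.part (height p 0 - 1) - 1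

/-- `q = p⁺`: increase the largest part of `p` by one. -/
def IsPlus (p : NatPartition M) (q : NatPartition N) : Prop :=
  q.part 0 = p.part 0 + 1 ∧ ∀ i, 1 ≤ i → q.part i = p.part i

/-- `q = f_{BC}(p) = (p⁻)_C`. -/
def IsFBC (n : ℕ) (p : NatPartition (2*n+1)) (q : NatPartition (2*n)) : Prop :=
  ∃ pm : NatPartition (2*n), IsMinus p pm ∧ IsCollapse 1 pm q

/-- `q = f_{CB}(p) = (p⁺)_B`. -/
def IsFCB (n : ℕ) (p : NatPartition (2*n)) (q : NatPartition (2*n+1)) : Prop :=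
  ∃ pp : NatPartition (2*n+1), IsPlus p pp ∧ IsCollapse 0 pp q

end NatPartition


/-- `q = d_{LS}(p) = d(f_{BC}(p))` for `p` of type `B`. -/
def IsDLSBC (n : ℕ) (p : NatPartition (2 * n + 1)) (q : NatPartition (2 * n)) : Prop :=
  ∃ q0 : NatPartition (2 * n), NatPartition.IsFBC n p q0 ∧ q.part = NatPartition.transposeFun q0

/-- `p = d_{LS}(q) = d(f_{CB}(q))` for `q` of type `C`. -/
def IsDLSCB (n : ℕ) (q : NatPartition (2 * n)) (p : NatPartition (2 * n + 1)) : Prop :=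
  ∃ p0 : NatPartition (2 * n + 1), NatPartition.IsFCB n q p0 ∧ p.part = NatPartition.transposeFun p0

/-!
Everything is read off partial sums. For a partition `p` of `N`, `rowSum p k` counts the boxes
in the first `k` rows of its diagram and `colSum p j` those in the first `j` columns. The two are
Legendre dual, `colSum p j + rowSum p k ≤ N + j * k` with equality at a corner, so transposition
reverses dominance. The parts `≢ N` (mod 2) have even multiplicity exactly when `colSum` is
`≡ N` at the cuts `≡ N`; hence the collapse of `m` is the transpose of the partition whose row
sums form the least concave staircase above `colSum m` with these parities. In particular it
loses at most one box at each cut, and none at a cut `k` where `rowSum m k ≡ k * N`.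

A special partition has `rowSum ≡ N` at the cuts `≡ N` and even `rowSum` at its other corners;
conversely, the transpose of a partition with these row-sum parities and with even
multiplicities of its parts `≢ N` is special. Applying the collapse bounds to `p⁻` and `q⁺`
gives these parities, so `d_LS` preserves specialness. For `d_LS ∘ d_LS = id` one checks that
the transpose of the original partition is the collapse: at the cuts `≡ N` and at its corners
this follows from the bounds and parities, and elsewhere from concavity. Order reversal follows
from the monotonicity of `⁻`, `⁺` and of the collapse.
-/

namespace NatPartition

variable {M N ε ε' : ℕ}

lemma mul_mod_two_of_mod_two_eq {a b c : ℕ} (ha : a % 2 = c % 2) (hb : b % 2 = c % 2) :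
    a * b % 2 = c % 2 := by
  rw [Nat.mul_mod, ha, hb]
  rcases Nat.mod_two_eq_zero_or_one c with h | h <;> simp [h]

lemma mod_two_eq_of_add_two {f : ℕ → ℕ} {k B c : ℕ}
    (hstep : ∀ j, j % 2 = k % 2 → f (j + 2) % 2 = f j % 2) (hB : ∀ j, B ≤ j → f j = c) :
    f k % 2 = c % 2 := by
  have h : ∀ t, f (k + 2 * t) % 2 = f k % 2 := by
    intro t
    induction t with
    | zero => rfl
    | succ t ih => rw [show k + 2 * (t + 1) = k + 2 * t + 2 by ring, hstep _ (by omega), ih]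
  rw [← h B, hB _ (by omega)]

section RowSum

def rowSum (p : NatPartition N) (k : ℕ) : ℕ := ∑ i ∈ Finset.range k, p.part i

@[simp] lemma rowSum_zero (p : NatPartition N) : rowSum p 0 = 0 := by simp [rowSum]

lemma rowSum_succ (p : NatPartition N) (k : ℕ) : rowSum p (k + 1) = rowSum p k + p.part k :=
  Finset.sum_range_succ _ _

lemma rowSum_mono (p : NatPartition N) {k l : ℕ} (h : k ≤ l) : rowSum p k ≤ rowSum p l :=
  Finset.sum_le_sum_of_subset (Finset.range_subset_range.2 h)

lemma rowSum_of_part_eq_zero (p : NatPartition N) {k : ℕ} (h : p.part k = 0) :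
    rowSum p k = N := by
  rcases le_total k p.bound with hk | hk
  · have hsplit := Finset.sum_range_add_sum_Ico p.part hk
    have htail : ∑ i ∈ Finset.Ico k p.bound, p.part i = 0 :=
      Finset.sum_eq_zero fun i hi => by
        have := p.antitone (Finset.mem_Ico.1 hi).1
        omega
    rw [htail, p.sum_parts] at hsplit
    exact hsplit
  · rw [rowSum, ← Finset.sum_range_add_sum_Ico _ hk, p.sum_parts, add_eq_left]
    exact Finset.sum_eq_zero fun i hi => p.bound_zero i (Finset.mem_Ico.1 hi).1

lemma rowSum_le (p : NatPartition N) (k : ℕ) : rowSum p k ≤ N :=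
  (rowSum_mono p (Nat.le_add_right k p.bound)).trans_eq
    (rowSum_of_part_eq_zero p (p.bound_zero _ (Nat.le_add_left _ _)))

lemma rowSum_add_mul_of_part_eq (p : NatPartition N) {a b w : ℕ} (hab : a ≤ b)
    (hw : ∀ j, a ≤ j → j < b → p.part j = w) : rowSum p b = rowSum p a + (b - a) * w := by
  rw [rowSum, ← Finset.sum_range_add_sum_Ico _ hab, Finset.sum_congr rfl fun j hj =>
    hw j (Finset.mem_Ico.1 hj).1 (Finset.mem_Ico.1 hj).2, Finset.sum_const, Nat.card_Ico,
    smul_eq_mul, rowSum]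

lemma part_eq_of_rowSum_eq {p : NatPartition N} {q : NatPartition M}
    (h : ∀ k, rowSum p k = rowSum q k) : p.part = q.part := by
  funext k
  have := h (k + 1)
  rw [rowSum_succ, rowSum_succ, h k] at this
  omega

lemma Dominates.part_eq {p q : NatPartition N} (hpq : Dominates p q) (hqp : Dominates q p) :
    p.part = q.part :=
  part_eq_of_rowSum_eq fun k => le_antisymm (hqp k) (hpq k)

lemma rowSum_add_two_of_part_eq (p : NatPartition N) {k : ℕ} (h : p.part (k + 1) = p.part k) :
    rowSum p (k + 2) + rowSum p k = 2 * rowSum p (k + 1) := by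
  have : rowSum p (k + 2) = rowSum p (k + 1) + p.part (k + 1) := rowSum_succ p (k + 1)
  have := rowSum_succ p k
  omega

end RowSum

section Height

lemma height_zero (p : NatPartition N) : height p 0 = height p 1 := rfl

lemma lt_height_iff (p : NatPartition N) {s : ℕ} (hs : 1 ≤ s) (j : ℕ) :
    j < height p s ↔ s ≤ p.part j := by
  rw [height, max_eq_left hs]
  constructor
  · intro h
    by_contra hj
    have hsub : (Finset.range p.bound).filter (fun i => s ≤ p.part i) ⊆ Finset.range j :=
      fun i hi => by
        simp only [Finset.mem_filter, Finset.mem_range] at hi ⊢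
        by_contra hij
        have := p.antitone (not_lt.1 hij)
        omega
    have := Finset.card_le_card hsub
    simp only [Finset.card_range] at this
    omega
  · intro h
    have hsub : Finset.range (j + 1) ⊆ (Finset.range p.bound).filter (fun i => s ≤ p.part i) :=
      fun i hi => by
        simp only [Finset.mem_filter, Finset.mem_range] at hi ⊢
        have hi' : s ≤ p.part i := h.trans (p.antitone (by omega))
        refine ⟨?_, hi'⟩
        by_contra hb
        have := p.bound_zero i (not_lt.1 hb)
        omega
    have := Finset.card_le_card hsub
    simp only [Finset.card_range] at this
    omega

lemma part_lt_of_height_le (p : NatPartition N) {s j : ℕ} (hs : 1 ≤ s) (h : height p s ≤ j) :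
    p.part j < s :=
  not_le.1 fun hj => absurd ((lt_height_iff p hs j).2 hj) (by omega)

lemma height_eq_of_le_of_lt (p : NatPartition N) {s k : ℕ} (hs : 1 ≤ s) (hk : 1 ≤ k)
    (h1 : s ≤ p.part (k - 1)) (h2 : p.part k < s) : height p s = k := by
  have := (lt_height_iff p hs (k - 1)).2 h1
  have := mt (lt_height_iff p hs k).1 (by omega)
  omega

lemma lt_height_zero_iff (p : NatPartition N) (j : ℕ) : j < height p 0 ↔ 1 ≤ p.part j :=
  lt_height_iff p le_rfl j

lemma one_le_height_zero (p : NatPartition (N + 1)) : 1 ≤ height p 0 := by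
  by_contra h
  have := rowSum_of_part_eq_zero p (k := 0)
    (by have := (lt_height_zero_iff p 0).not.1 (by omega); omega)
  simp at this

lemma rowSum_of_height_le (p : NatPartition N) {k : ℕ} (h : height p 0 ≤ k) : rowSum p k = N :=
  rowSum_of_part_eq_zero p (by have := (lt_height_zero_iff p k).not.1 (by omega); omega)

lemma rowSum_lt_of_lt_height (p : NatPartition N) {k : ℕ} (h : k < height p 0) :
    rowSum p k < N := by
  have := (lt_height_zero_iff p k).1 h
  have := rowSum_succ p k
  have := rowSum_le p (k + 1)
  omega

lemma height_succ_add_mult (p : NatPartition N) {s : ℕ} (hs : 1 ≤ s) :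
    height p (s + 1) + mult p s = height p s := by
  unfold height mult
  rw [max_eq_left hs, max_eq_left (by omega), ← Finset.card_union_of_disjoint]
  · congr 1
    ext j
    simp only [Finset.mem_union, Finset.mem_filter, Finset.mem_range]
    omega
  · rw [Finset.disjoint_filter]
    intro j _ h1 h2
    omega

lemma mult_ne_zero_of_part_eq (p : NatPartition N) {j s : ℕ} (hs : 1 ≤ s) (h : p.part j = s) :
    mult p s ≠ 0 := by
  have := height_succ_add_mult p hs
  have := (lt_height_iff p hs j).2 h.ge
  have := (lt_height_iff p (by omega : 1 ≤ s + 1) j).not.2 (by omega)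
  omega

end Height

section Transpose

lemma transposeFun_eq_height (p : NatPartition N) (i : ℕ) :
    transposeFun p i = height p (i + 1) := by
  unfold transposeFun height
  congr 1
  ext j
  simp only [Finset.mem_filter, Finset.mem_range]
  omega

lemma lt_transposeFun_iff (p : NatPartition N) (i j : ℕ) :
    j < transposeFun p i ↔ i + 1 ≤ p.part j := by
  rw [transposeFun_eq_height, lt_height_iff p (Nat.le_add_left 1 i)]

lemma transposeFun_antitone (p : NatPartition N) ⦃i j : ℕ⦄ (hij : i ≤ j) :
    transposeFun p j ≤ transposeFun p i :=
  le_of_forall_lt fun l hl =>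
    (lt_transposeFun_iff p i l).2 (le_trans (by omega) ((lt_transposeFun_iff p j l).1 hl))

lemma transposeFun_congr {p : NatPartition N} {q : NatPartition M} (h : p.part = q.part) :
    transposeFun p = transposeFun q :=
  funext fun i => eq_of_forall_lt_iff fun j => by rw [lt_transposeFun_iff, lt_transposeFun_iff, h]

lemma height_of_part_eq_transposeFun {c : NatPartition N} {q : NatPartition M}
    (hq : q.part = transposeFun c) {s : ℕ} (hs : 1 ≤ s) : height q s = c.part (s - 1) :=
  eq_of_forall_lt_iff fun j => by
    have := lt_transposeFun_iff c j (s - 1)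
    rw [lt_height_iff q hs, hq]
    omega

def colSum (p : NatPartition N) (k : ℕ) : ℕ := ∑ i ∈ Finset.range k, transposeFun p i

@[simp] lemma colSum_zero (p : NatPartition N) : colSum p 0 = 0 := by simp [colSum]

lemma colSum_succ (p : NatPartition N) (k : ℕ) :
    colSum p (k + 1) = colSum p k + transposeFun p k :=
  Finset.sum_range_succ _ _

lemma colSum_mono (p : NatPartition N) {k l : ℕ} (h : k ≤ l) : colSum p k ≤ colSum p l :=
  Finset.sum_le_sum_of_subset (Finset.range_subset_range.2 h)

lemma colSum_add_two_le (p : NatPartition N) (k : ℕ) :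
    colSum p (k + 2) + colSum p k ≤ 2 * colSum p (k + 1) := by
  have : colSum p (k + 2) = colSum p (k + 1) + transposeFun p (k + 1) := colSum_succ p (k + 1)
  have := colSum_succ p k
  have := transposeFun_antitone p (Nat.le_add_right k 1)
  omega

lemma colSum_eq_sum_min (p : NatPartition N) {B : ℕ} (hB : p.bound ≤ B) (k : ℕ) :
    colSum p k = ∑ j ∈ Finset.range B, min (p.part j) k := by
  have hcol : ∀ i,
      transposeFun p i = ((Finset.range B).filter (fun j => i + 1 ≤ p.part j)).card := by
    intro i
    unfold transposeFun
    congr 1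
    ext j
    simp only [Finset.mem_filter, Finset.mem_range]
    refine ⟨fun h => ⟨by omega, h.2⟩, fun h => ⟨?_, h.2⟩⟩
    by_contra hj
    have := p.bound_zero j (not_lt.1 hj)
    omega
  have hrow : ∀ m, ((Finset.range k).filter (fun i => i + 1 ≤ m)).card = min m k := by
    intro m
    rw [show (Finset.range k).filter (fun i => i + 1 ≤ m) = Finset.range (min m k) by
      ext i; simp only [Finset.mem_filter, Finset.mem_range]; omega, Finset.card_range]
  unfold colSum
  simp_rw [hcol, Finset.card_filter]
  rw [Finset.sum_comm]
  exact Finset.sum_congr rfl fun j _ => by rw [← Finset.card_filter, hrow]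

lemma colSum_le (p : NatPartition N) (k : ℕ) : colSum p k ≤ N := by
  rw [colSum_eq_sum_min p le_rfl]
  exact (Finset.sum_le_sum fun j _ => min_le_left _ _).trans_eq p.sum_parts

lemma colSum_of_part_zero_le (p : NatPartition N) {k : ℕ} (h : p.part 0 ≤ k) :
    colSum p k = N := by
  rw [colSum_eq_sum_min p le_rfl]
  exact (Finset.sum_congr rfl fun j _ => min_eq_left ((p.antitone (Nat.zero_le j)).trans h)).trans
    p.sum_parts

/-- The first `j` columns and the first `k` rows share at most `j * k` boxes. -/
lemma colSum_add_rowSum_le (p : NatPartition N) (j k : ℕ) :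
    colSum p j + rowSum p k ≤ N + j * k := by
  have hsplit := Finset.sum_range_add_sum_Ico (fun i => min (p.part i) j)
    (Nat.le_add_right k p.bound)
  have hhead : ∑ i ∈ Finset.range k, min (p.part i) j ≤ j * k := by
    simpa [mul_comm] using
      Finset.sum_le_sum fun i (_ : i ∈ Finset.range k) => min_le_right (p.part i) j
  have htail :=
    Finset.sum_le_sum fun i (_ : i ∈ Finset.Ico k (k + p.bound)) => min_le_left (p.part i) j
  have hrows := Finset.sum_range_add_sum_Ico p.part (Nat.le_add_right k p.bound)
  rw [← rowSum, ← rowSum, rowSum_of_part_eq_zero p (p.bound_zero _ (Nat.le_add_left _ _))]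
    at hrows
  rw [colSum_eq_sum_min p (Nat.le_add_left _ k)]
  omega

lemma colSum_add_rowSum_eq (p : NatPartition N) {j k : ℕ} (hk : 1 ≤ k) (h1 : p.part k ≤ j)
    (h2 : j ≤ p.part (k - 1)) : colSum p j + rowSum p k = N + j * k := by
  have hsplit := Finset.sum_range_add_sum_Ico (fun i => min (p.part i) j)
    (Nat.le_add_right k p.bound)
  have hhead : ∑ i ∈ Finset.range k, min (p.part i) j = j * k := by
    rw [Finset.sum_congr rfl fun i hi => min_eq_right (h2.trans (p.antitone
      (by simp only [Finset.mem_range] at hi; omega))), Finset.sum_const, Finset.card_range,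
      smul_eq_mul, mul_comm]
  have htail : ∑ i ∈ Finset.Ico k (k + p.bound), min (p.part i) j =
      ∑ i ∈ Finset.Ico k (k + p.bound), p.part i :=
    Finset.sum_congr rfl fun i hi => min_eq_left ((p.antitone (Finset.mem_Ico.1 hi).1).trans h1)
  have hrows := Finset.sum_range_add_sum_Ico p.part (Nat.le_add_right k p.bound)
  rw [← rowSum, ← rowSum, rowSum_of_part_eq_zero p (p.bound_zero _ (Nat.le_add_left _ _))]
    at hrows
  rw [colSum_eq_sum_min p (Nat.le_add_left _ k)]
  omega

def transpose (p : NatPartition N) : NatPartition N where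
  part := transposeFun p
  antitone := transposeFun_antitone p
  bound := p.part 0
  bound_zero i hi := by
    by_contra h
    have := (lt_transposeFun_iff p i 0).1 (by omega)
    omega
  sum_parts := colSum_of_part_zero_le p le_rfl

lemma rowSum_transpose (p : NatPartition N) (k : ℕ) : rowSum (transpose p) k = colSum p k := rfl

lemma transposeFun_transpose (p : NatPartition N) : transposeFun (transpose p) = p.part :=
  funext fun i => eq_of_forall_lt_iff fun j => by
    have := lt_transposeFun_iff p j i
    rw [lt_transposeFun_iff]
    show i + 1 ≤ transposeFun p j ↔ _
    omega

lemma colSum_transpose (p : NatPartition N) (k : ℕ) : colSum (transpose p) k = rowSum p k := by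
  unfold colSum rowSum
  rw [transposeFun_transpose]

lemma rowSum_of_part_eq_transposeFun {c : NatPartition N} {q : NatPartition M}
    (hq : q.part = transposeFun c) (k : ℕ) : rowSum q k = colSum c k := by
  unfold rowSum colSum
  rw [hq]

lemma colSum_of_part_eq_transposeFun {c : NatPartition N} {q : NatPartition M}
    (hq : q.part = transposeFun c) (k : ℕ) : colSum q k = rowSum c k := by
  unfold colSum rowSum
  rw [transposeFun_congr (q := transpose c) hq, transposeFun_transpose]

lemma exists_colSum_add_rowSum_eq (p : NatPartition N) (k : ℕ) :
    ∃ j, colSum p j + rowSum p k = N + j * k := by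
  rcases Nat.eq_zero_or_pos k with rfl | hk
  · exact ⟨p.part 0, by simp [colSum_of_part_zero_le p le_rfl]⟩
  · exact ⟨p.part k, colSum_add_rowSum_eq p hk le_rfl (p.antitone (Nat.sub_le k 1))⟩

lemma exists_rowSum_add_colSum_eq (p : NatPartition N) (j : ℕ) :
    ∃ k, colSum p j + rowSum p k = N + j * k := by
  obtain ⟨k, hk⟩ := exists_colSum_add_rowSum_eq (transpose p) j
  rw [colSum_transpose, rowSum_transpose] at hk
  exact ⟨k, by rw [Nat.mul_comm]; omega⟩

lemma Dominates.colSum_le {p q : NatPartition N} (h : Dominates p q) (j : ℕ) :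
    colSum p j ≤ colSum q j := by
  obtain ⟨k, hk⟩ := exists_rowSum_add_colSum_eq q j
  have hpq : rowSum q k ≤ rowSum p k := h k
  have := colSum_add_rowSum_le p j k
  omega

lemma Dominates.transpose {p q : NatPartition N} (h : Dominates p q) :
    Dominates (transpose q) (transpose p) :=
  h.colSum_le

end Transpose

section Parity

lemma EvenMult.colSum_mod_two {p : NatPartition N} (hp : EvenMult ε p) {k : ℕ}
    (hk : k % 2 ≠ ε % 2) : colSum p k % 2 = N % 2 := by
  refine mod_two_eq_of_add_two (fun j hj => ?_) (fun j hj => colSum_of_part_zero_le p hj)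
  have hsum : colSum p (j + 2) = colSum p j + height p (j + 1) + height p (j + 2) := by
    rw [colSum_succ, colSum_succ, transposeFun_eq_height, transposeFun_eq_height]
  have : height p (j + 2) + mult p (j + 1) = height p (j + 1) := height_succ_add_mult p (by omega)
  have := hp (j + 1) (by omega) (by omega)
  omega

lemma mult_add_part_of_part_eq_transposeFun {c : NatPartition N} {q : NatPartition M}
    (hq : q.part = transposeFun c) {s : ℕ} (hs : 1 ≤ s) :
    mult q s + c.part s = c.part (s - 1) := by
  have := height_succ_add_mult q hs
  rw [height_of_part_eq_transposeFun hq hs, height_of_part_eq_transposeFun hq (by omega),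
    Nat.add_sub_cancel] at this
  omega

lemma SpecialCond.part_add_part_succ_mod_two {p : NatPartition N} (hp : SpecialCond ε ε' p)
    (hε : ε < 2) {k : ℕ} (hk : k % 2 = ε' % 2) : (p.part k + p.part (k + 1)) % 2 = 0 := by
  by_contra hodd
  have hlt : p.part (k + 1) < p.part k := lt_of_le_of_ne (p.antitone (by omega)) (by omega)
  by_cases hv : p.part k % 2 = ε % 2
  · have hh : height p (p.part k) = k + 1 :=
      height_eq_of_le_of_lt p (by omega) (by omega) (by simp) hlt
    have := hp.2.1 _ (by omega) (mult_ne_zero_of_part_eq p (by omega) rfl) hv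
    omega
  · have hh : height p (p.part (k + 1) + 1) = k + 1 :=
      height_eq_of_le_of_lt p (by omega) (by omega) (by simpa using hlt) (by omega)
    rcases Nat.eq_zero_or_pos (p.part (k + 1)) with h0 | hpos
    · have := hp.2.2 (by omega)
      rw [height_zero] at this
      rw [h0, zero_add] at hh
      omega
    · have := height_succ_add_mult p hpos
      have := hp.1 _ hpos (by omega)
      have := hp.2.1 _ hpos (mult_ne_zero_of_part_eq p hpos rfl) (by omega)
      omega

lemma SpecialCond.rowSum_mod_two {p : NatPartition N} (hp : SpecialCond ε ε' p) (hε : ε < 2)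
    {k : ℕ} (hk : k % 2 = ε' % 2) : rowSum p k % 2 = N % 2 := by
  refine mod_two_eq_of_add_two (B := p.bound) (fun j hj => ?_)
    (fun j hj => rowSum_of_part_eq_zero p (p.bound_zero j hj))
  have : rowSum p (j + 2) = rowSum p j + p.part j + p.part (j + 1) := by
    rw [rowSum_succ, rowSum_succ]
  have := hp.part_add_part_succ_mod_two hε (k := j) (by omega)
  omega

lemma SpecialCond.evenMult_transpose {p : NatPartition N} (hp : SpecialCond ε ε' p)
    (hε : ε < 2) (hεε' : ε % 2 ≠ ε' % 2) : EvenMult ε (transpose p) := by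
  intro s hs hsε
  have := mult_add_part_of_part_eq_transposeFun (q := transpose p) rfl hs
  have := hp.part_add_part_succ_mod_two hε (k := s - 1) (by omega)
  rw [Nat.sub_add_cancel hs] at this
  omega

/-- The block of parts equal to `c.part (l - 1)` is `≢ N`, hence of even length, so the row sum
keeps its parity across it: an offending corner yields a lower one, down to the empty cut. -/
lemma EvenMult.rowSum_mod_two_of_part_lt {c : NatPartition N} (hc : EvenMult ε c)
    (hε : ε = (N + 1) % 2)
    (hA : ∀ k, k % 2 = N % 2 → rowSum c k % 2 = N % 2) {l : ℕ} (hl : l % 2 ≠ N % 2)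
    (hlt : c.part l < c.part (l - 1)) : rowSum c l % 2 = 0 := by
  induction l using Nat.strong_induction_on with
  | _ l IH =>
  by_contra hodd
  have hl1 : 1 ≤ l := by
    rcases l with _ | l
    · simp at hlt
    · omega
  set w := c.part (l - 1) with hw
  have hsucc : rowSum c l = rowSum c (l - 1) + w := by rw [← rowSum_succ, Nat.sub_add_cancel hl1]
  have := hA (l - 1) (by omega)
  have hw1 : 1 ≤ w := by omega
  have hwε : w % 2 = ε % 2 := by omega
  have hh : height c w = l := height_eq_of_le_of_lt c hw1 hl1 le_rfl hlt
  have hmult := hc w hw1 hwε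
  have := mult_ne_zero_of_part_eq c hw1 hw.symm
  have := height_succ_add_mult c hw1
  set l₂ := height c (w + 1)
  have hrun : rowSum c l = rowSum c l₂ + (l - l₂) * w :=
    rowSum_add_mul_of_part_eq c (by omega) fun j hj1 hj2 => by
      have := (lt_height_iff c hw1 j).1 (by omega)
      have := part_lt_of_height_le c (by omega : 1 ≤ w + 1) hj1
      omega
  have : (l - l₂) * w % 2 = 0 := by
    rw [Nat.mul_mod, show (l - l₂) % 2 = 0 by omega, zero_mul, Nat.zero_mod]
  have hl₂odd : rowSum c l₂ % 2 = 1 := by omega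
  have hl₂ : 1 ≤ l₂ := by
    rcases Nat.eq_zero_or_pos l₂ with h | h
    · rw [h, rowSum_zero] at hl₂odd
      omega
    · exact h
  have hlt₂ : c.part l₂ < c.part (l₂ - 1) := by
    have := (lt_height_iff c (by omega : 1 ≤ w + 1) (l₂ - 1)).1 (by omega)
    have := part_lt_of_height_le c (by omega : 1 ≤ w + 1) (le_refl l₂)
    omega
  have := IH l₂ (by omega) (by omega) hlt₂
  omega

lemma SpecialCond.rowSum_mod_two_of_part_lt {p : NatPartition N} (hp : SpecialCond ε ε' p)
    (hε : ε = (N + 1) % 2) (hε' : ε' = N % 2) {l : ℕ} (hl : l % 2 ≠ N % 2)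
    (hlt : p.part l < p.part (l - 1)) : rowSum p l % 2 = 0 :=
  hp.1.rowSum_mod_two_of_part_lt hε (fun _ hk => hp.rowSum_mod_two (by omega) (by omega)) hl hlt

lemma specialCond_of_part_eq_transposeFun (hε : ε = (N + 1) % 2) (hε' : ε' = N % 2)
    {c : NatPartition N} (hc : EvenMult ε c) (hA : ∀ k, k % 2 = N % 2 → rowSum c k % 2 = N % 2)
    {q : NatPartition M} (hq : q.part = transposeFun c) : SpecialCond ε ε' q := by
  have hstep : ∀ s, 1 ≤ s → rowSum c s = rowSum c (s - 1) + c.part (s - 1) := fun s hs => by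
    rw [← rowSum_succ, Nat.sub_add_cancel hs]
  refine ⟨fun s hs hsε => ?_, fun s hs hne hsε => ?_, fun h0 => ?_⟩
  · have := mult_add_part_of_part_eq_transposeFun hq hs
    have := hstep s hs
    have := rowSum_succ c s
    have := hA (s - 1) (by omega)
    have := hA (s + 1) (by omega)
    omega
  · have := mult_add_part_of_part_eq_transposeFun hq hs
    have := hc.rowSum_mod_two_of_part_lt hε hA (l := s) (by omega) (by omega)
    have := hstep s hs
    have := hA (s - 1) (by omega)
    rw [height_of_part_eq_transposeFun hq hs]
    omega
  · have := hstep 1 le_rfl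
    have := hA 1 (by omega)
    rw [height_zero, height_of_part_eq_transposeFun hq le_rfl]
    simp only [Nat.sub_self, rowSum_zero, zero_add] at *
    omega

lemma rowSum_le_of_concave (p : NatPartition N) {f : ℕ → ℕ}
    (hf : ∀ k, f (k + 2) + f k ≤ 2 * f (k + 1)) {δ : ℕ}
    (h1 : ∀ k, k % 2 = δ % 2 → rowSum p k ≤ f k)
    (h2 : ∀ k, k % 2 ≠ δ % 2 → p.part k < p.part (k - 1) → rowSum p k ≤ f k) (k : ℕ) :
    rowSum p k ≤ f k := by
  by_cases hk : k % 2 = δ % 2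
  · exact h1 k hk
  rcases k with _ | k
  · simp
  rcases lt_or_eq_of_le (p.antitone (Nat.le_succ k)) with hlt | heq
  · exact h2 _ hk hlt
  · have := rowSum_add_two_of_part_eq p heq
    have := h1 k (by omega)
    have := h1 (k + 2) (by omega)
    have := hf k
    omega

end Parity

section Collapse

lemma dominates_iff_colSum_le {p q : NatPartition N} :
    Dominates p q ↔ ∀ k, colSum p k ≤ colSum q k := by
  refine ⟨Dominates.colSum_le, fun h k => ?_⟩
  have := Dominates.colSum_le (p := transpose q) (q := transpose p) h k
  rwa [colSum_transpose, colSum_transpose] at this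

def ofRowSums (F : ℕ → ℕ) (hmono : ∀ k, F k ≤ F (k + 1))
    (hconc : ∀ k, F (k + 2) + F k ≤ 2 * F (k + 1)) (h0 : F 0 = 0)
    (B : ℕ) (hstab : ∀ k, B ≤ k → F k = N) : NatPartition N where
  part i := F (i + 1) - F i
  antitone := by
    intro i j hij
    induction j, hij using Nat.le_induction with
    | base => rfl
    | succ j _ ih =>
      have : F (j + 1 + 1) + F j ≤ 2 * F (j + 1) := hconc j
      have := hmono j
      have := hmono (j + 1)
      omega
  bound := B
  bound_zero i hi := by
    have := hstab i hi
    have := hstab (i + 1) (by omega)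
    omega
  sum_parts := by
    show ∑ i ∈ Finset.range B, (F (i + 1) - F i) = N
    rw [Finset.sum_range_tsub (monotone_nat_of_le_succ hmono), h0, hstab B le_rfl, Nat.sub_zero]

lemma rowSum_ofRowSums (F : ℕ → ℕ) (hmono : ∀ k, F k ≤ F (k + 1))
    (hconc : ∀ k, F (k + 2) + F k ≤ 2 * F (k + 1)) (h0 : F 0 = 0)
    (B : ℕ) (hstab : ∀ k, B ≤ k → F k = N) (k : ℕ) :
    rowSum (ofRowSums F hmono hconc h0 B hstab) k = F k := by
  induction k with
  | zero => simp [h0]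
  | succ k ih =>
    rw [rowSum_succ, ih]
    have := hmono k
    show F k + (F (k + 1) - F k) = F (k + 1)
    omega

/-- The candidates for the column sums of a partition dominated by `m` whose parts `≢ N`
(mod 2) have even multiplicity; the pointwise least one gives the collapse of `m`. -/
structure IsCollapseProfile (m : NatPartition N) (T : ℕ → ℕ) : Prop where
  zero : T 0 = 0
  mono : ∀ k, T k ≤ T (k + 1)
  concave : ∀ k, T (k + 2) + T k ≤ 2 * T (k + 1)
  colSum_le : ∀ k, colSum m k ≤ T k
  le : ∀ k, T k ≤ N
  mod_two : ∀ k, k % 2 = N % 2 → T k % 2 = N % 2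

noncomputable def collapseProfile (m : NatPartition N) (k : ℕ) : ℕ :=
  sInf {x | ∃ T, IsCollapseProfile m T ∧ T k = x}

lemma isCollapseProfile_indicator (m : NatPartition N) :
    IsCollapseProfile m (fun k => if k = 0 then 0 else N) where
  zero := rfl
  mono k := by rcases k with _ | k <;> simp
  concave k := by rcases k with _ | k <;> simp <;> omega
  colSum_le k := by
    rcases k with _ | k
    · simp
    · exact colSum_le m _
  le k := by rcases k with _ | k <;> simp
  mod_two k hk := by rcases k with _ | k <;> simp; omega

lemma collapseProfile_le (m : NatPartition N) {T : ℕ → ℕ} (hT : IsCollapseProfile m T)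
    (k : ℕ) : collapseProfile m k ≤ T k :=
  Nat.sInf_le ⟨T, hT, rfl⟩

lemma exists_collapseProfile_eq (m : NatPartition N) (k : ℕ) :
    ∃ T, IsCollapseProfile m T ∧ T k = collapseProfile m k :=
  Nat.sInf_mem (s := {x | ∃ T, IsCollapseProfile m T ∧ T k = x})
    ⟨_, _, isCollapseProfile_indicator m, rfl⟩

lemma isCollapseProfile_collapseProfile (m : NatPartition N) :
    IsCollapseProfile m (collapseProfile m) where
  zero := by
    obtain ⟨T, hT, hTk⟩ := exists_collapseProfile_eq m 0
    rw [← hTk, hT.zero]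
  mono k := by
    obtain ⟨T, hT, hTk⟩ := exists_collapseProfile_eq m (k + 1)
    exact (collapseProfile_le m hT k).trans ((hT.mono k).trans_eq hTk)
  concave k := by
    -- compare with a profile attaining the infimum at `k + 1`
    obtain ⟨T, hT, hTk⟩ := exists_collapseProfile_eq m (k + 1)
    have := hT.concave k
    have := collapseProfile_le m hT (k + 2)
    have := collapseProfile_le m hT k
    omega
  colSum_le k := by
    obtain ⟨T, hT, hTk⟩ := exists_collapseProfile_eq m k
    exact hTk ▸ hT.colSum_le k
  le k := by
    obtain ⟨T, hT, hTk⟩ := exists_collapseProfile_eq m k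
    exact hTk ▸ hT.le k
  mod_two k hk := by
    obtain ⟨T, hT, hTk⟩ := exists_collapseProfile_eq m k
    exact hTk ▸ hT.mod_two k hk

lemma collapseProfile_of_part_zero_le (m : NatPartition N) {k : ℕ} (h : m.part 0 ≤ k) :
    collapseProfile m k = N :=
  le_antisymm ((isCollapseProfile_collapseProfile m).le k)
    ((colSum_of_part_zero_le m h).symm.trans_le ((isCollapseProfile_collapseProfile m).colSum_le k))

lemma isCollapseProfile_colSum {m x : NatPartition N} (hx : EvenMult ε x) (hε : ε = (N + 1) % 2)
    (hxm : Dominates m x) : IsCollapseProfile m (colSum x) where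
  zero := colSum_zero x
  mono k := colSum_mono x (Nat.le_succ k)
  concave := colSum_add_two_le x
  colSum_le := hxm.colSum_le
  le := colSum_le x
  mod_two k hk := hx.colSum_mod_two (by omega)

lemma IsCollapseProfile.min_linear {m : NatPartition N} {T : ℕ → ℕ}
    (hT : IsCollapseProfile m T) {k X : ℕ} (hX : X ≤ rowSum m k) (hpar : (k * N + X) % 2 = 0) :
    IsCollapseProfile m (fun j => min (T j) (N + k * j - X)) := by
  have hXN := hX.trans (rowSum_le m k)
  refine ⟨by simp [hT.zero], fun j => ?_, fun j => ?_, fun j => ?_, fun j => ?_, fun j hj => ?_⟩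
  · have := hT.mono j
    have : k * (j + 1) = k * j + k := by ring
    omega
  · have := hT.concave j
    have : k * (j + 1) = k * j + k := by ring
    have : k * (j + 2) = k * j + 2 * k := by ring
    omega
  · have := hT.colSum_le j
    have := colSum_add_rowSum_le m j k
    have : j * k = k * j := Nat.mul_comm _ _
    omega
  · have := hT.le j
    omega
  · have := hT.mod_two j hj
    have : k * j % 2 = k * N % 2 := by rw [Nat.mul_mod, hj, ← Nat.mul_mod]
    omega

noncomputable def collapse (m : NatPartition N) : NatPartition N :=
  transpose (ofRowSums (collapseProfile m) (isCollapseProfile_collapseProfile m).mono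
    (isCollapseProfile_collapseProfile m).concave (isCollapseProfile_collapseProfile m).zero
    (m.part 0) fun _ hk => collapseProfile_of_part_zero_le m hk)

lemma colSum_collapse (m : NatPartition N) (k : ℕ) :
    colSum (collapse m) k = collapseProfile m k := by
  rw [collapse, colSum_transpose, rowSum_ofRowSums]

lemma dominates_collapse (m : NatPartition N) : Dominates m (collapse m) :=
  dominates_iff_colSum_le.2 fun k => (colSum_collapse m k).symm ▸
    (isCollapseProfile_collapseProfile m).colSum_le k

lemma isCollapse_collapse (hε : ε = (N + 1) % 2) (m : NatPartition N) :
    IsCollapse ε m (collapse m) := by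
  have hT := isCollapseProfile_collapseProfile m
  refine ⟨fun s hs hsε => ?_, dominates_collapse m, fun x hx hxm => ?_⟩
  · have h1 := colSum_succ (collapse m) (s - 1)
    have h2 := colSum_succ (collapse m) s
    rw [Nat.sub_add_cancel hs, transposeFun_eq_height, Nat.sub_add_cancel hs] at h1
    rw [transposeFun_eq_height] at h2
    simp only [colSum_collapse] at h1 h2
    have := height_succ_add_mult (collapse m) hs
    have := hT.mod_two (s - 1) (by omega)
    have := hT.mod_two (s + 1) (by omega)
    omega
  · refine dominates_iff_colSum_le.2 fun k => ?_
    rw [colSum_collapse]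
    exact collapseProfile_le m (isCollapseProfile_colSum hx hε hxm) k

lemma rowSum_collapse_le (m : NatPartition N) (k : ℕ) : rowSum (collapse m) k ≤ rowSum m k :=
  dominates_collapse m k

/-- Capping profiles by the line `j ↦ N + k * j - X` keeps them profiles; by Legendre duality
the cap amounts to `X ≤ rowSum (collapse m) k`. -/
lemma le_rowSum_collapse (m : NatPartition N) {k X : ℕ} (hX : X ≤ rowSum m k)
    (hpar : (k * N + X) % 2 = 0) : X ≤ rowSum (collapse m) k := by
  obtain ⟨j, hj⟩ := exists_colSum_add_rowSum_eq (collapse m) k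
  have := collapseProfile_le m ((isCollapseProfile_collapseProfile m).min_linear hX hpar) j
  have := hX.trans (rowSum_le m k)
  rw [colSum_collapse] at hj
  have : j * k = k * j := Nat.mul_comm _ _
  omega

lemma rowSum_collapse_of_mod_two (m : NatPartition N) {k : ℕ}
    (hpar : (k * N + rowSum m k) % 2 = 0) : rowSum (collapse m) k = rowSum m k :=
  le_antisymm (rowSum_collapse_le m k) (le_rowSum_collapse m le_rfl hpar)

lemma rowSum_le_rowSum_collapse_add_one (m : NatPartition N) (k : ℕ) :
    rowSum m k ≤ rowSum (collapse m) k + 1 := by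
  by_cases hpar : (k * N + rowSum m k) % 2 = 0
  · exact (rowSum_collapse_of_mod_two m hpar).ge.trans (Nat.le_succ _)
  rcases Nat.eq_zero_or_pos (rowSum m k) with h | h
  · omega
  · have := le_rowSum_collapse m (X := rowSum m k - 1) (Nat.sub_le _ _) (by omega)
    omega

/-- The column sum of `m` at `j` has the wrong parity, so every profile exceeds it there. -/
lemma rowSum_collapse_lt (m : NatPartition N) {k j : ℕ} (hk : 1 ≤ k) (hj : j % 2 = N % 2)
    (h1 : m.part k ≤ j) (h2 : j ≤ m.part (k - 1)) (hpar : (k * j + rowSum m k) % 2 = 1) :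
    rowSum (collapse m) k < rowSum m k := by
  have hT := isCollapseProfile_collapseProfile m
  have heq := colSum_add_rowSum_eq m hk h1 h2
  have hle := colSum_add_rowSum_le (collapse m) j k
  have := hT.colSum_le j
  have := hT.mod_two j hj
  have : collapseProfile m j ≠ colSum m j := fun h => by
    have : j * k = k * j := Nat.mul_comm _ _
    omega
  rw [colSum_collapse] at hle
  omega

/-- Only a flat step `m.part k = m.part (k - 1) ≢ N` can prevent the collapse from fixing the
parity at the cut `k`. -/
lemma rowSum_collapse_mod_two (m : NatPartition N) {k : ℕ} (hk : k % 2 = N % 2)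
    (hm : m.part k < m.part (k - 1) ∨ m.part k % 2 = N % 2 ∨ rowSum m k % 2 = N % 2) :
    rowSum (collapse m) k % 2 = N % 2 := by
  have hkN : k * N % 2 = N % 2 := mul_mod_two_of_mod_two_eq hk rfl
  by_cases hS : rowSum m k % 2 = N % 2
  · rw [rowSum_collapse_of_mod_two m (by omega)]
    exact hS
  rcases Nat.eq_zero_or_pos k with rfl | hk1
  · simp at hS ⊢
    omega
  obtain ⟨j, hj, h1, h2⟩ :
      ∃ j, j % 2 = N % 2 ∧ m.part k ≤ j ∧ j ≤ m.part (k - 1) := by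
    have := m.antitone (Nat.sub_le k 1)
    by_cases hpk : m.part k % 2 = N % 2
    · exact ⟨m.part k, hpk, le_rfl, this⟩
    · exact ⟨m.part k + 1, by omega, by omega, by omega⟩
  have := rowSum_collapse_lt m hk1 hj h1 h2 (by
    have := mul_mod_two_of_mod_two_eq hk hj
    omega)
  have := rowSum_le_rowSum_collapse_add_one m k
  omega

lemma IsCollapse.part_eq {m c₁ c₂ : NatPartition N} (h₁ : IsCollapse ε m c₁)
    (h₂ : IsCollapse ε m c₂) : c₁.part = c₂.part :=
  Dominates.part_eq (h₁.2.2 c₂ h₂.1 h₂.2.1) (h₂.2.2 c₁ h₁.1 h₁.2.1)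

lemma IsCollapse.of_part_eq {m₁ m₂ c : NatPartition N} (h : m₁.part = m₂.part)
    (hc : IsCollapse ε m₁ c) : IsCollapse ε m₂ c := by
  have key : ∀ r, Dominates m₁ r ↔ Dominates m₂ r := fun r => by
    unfold Dominates
    rw [h]
  exact ⟨hc.1, (key c).1 hc.2.1, fun r hr hd => hc.2.2 r hr ((key r).2 hd)⟩

lemma IsCollapse.dominates {m₁ m₂ c₁ c₂ : NatPartition N} (h₁ : IsCollapse ε m₁ c₁)
    (h₂ : IsCollapse ε m₂ c₂) (h : Dominates m₁ m₂) : Dominates c₁ c₂ :=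
  h₁.2.2 c₂ h₂.1 fun k => (h₂.2.1 k).trans (h k)

/-- Across a flat step the row sums of `p` are linear while the column sums of a competitor are
concave, so they only have to be compared at the cuts `≡ N` and at the corners of `p`. -/
lemma isCollapse_transpose {m p : NatPartition N} (hp : SpecialCond ε ε' p)
    (hε : ε = (N + 1) % 2) (hε' : ε' = N % 2) (hdom : ∀ k, colSum p k ≤ rowSum m k)
    (hlow : ∀ k, k % 2 = N % 2 → rowSum p k ≤ colSum m k + 1)
    (hcorner : ∀ k, k % 2 ≠ N % 2 → p.part k < p.part (k - 1) → rowSum p k ≤ colSum m k) :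
    IsCollapse ε m (transpose p) := by
  refine ⟨hp.evenMult_transpose (by omega) (by omega), hdom, fun x hx hxm => ?_⟩
  have hmx := hxm.colSum_le
  have hle : ∀ k, rowSum p k ≤ colSum x k := rowSum_le_of_concave p (colSum_add_two_le x)
    (δ := N) (fun k hk => by
      have := hlow k hk
      have := hmx k
      have := hp.rowSum_mod_two (by omega) (k := k) (by omega)
      have := hx.colSum_mod_two (k := k) (by omega)
      omega)
    (fun k hk hlt => (hcorner k hk hlt).trans (hmx k))
  refine dominates_iff_colSum_le.2 fun k => ?_
  rw [colSum_transpose]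
  exact hle k

end Collapse

section MinusPlus

lemma dominates_congr {p₁ p₂ q₁ q₂ : NatPartition N} (hp : p₁.part = p₂.part)
    (hq : q₁.part = q₂.part) : Dominates p₁ q₁ ↔ Dominates p₂ q₂ := by
  unfold Dominates
  rw [hp, hq]

lemma one_le_part_height_zero_sub_one (p : NatPartition (N + 1)) :
    1 ≤ p.part (height p 0 - 1) :=
  (lt_height_zero_iff p _).1 (by have := one_le_height_zero p; omega)

def minus (p : NatPartition (N + 1)) : NatPartition N where
  part i := p.part i - if i = height p 0 - 1 then 1 else 0
  antitone i j hij := by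
    have := p.antitone hij
    have := one_le_height_zero p
    by_cases hi : i = height p 0 - 1
    · rcases hij.lt_or_eq with hlt | rfl
      · have := (lt_height_zero_iff p j).not.1 (by omega)
        omega
      · omega
    · simp only [hi, if_false]
      omega
  bound := p.bound
  bound_zero i hi := by
    have := p.bound_zero i hi
    omega
  sum_parts := by
    have hpos := one_le_part_height_zero_sub_one p
    have hmem : height p 0 - 1 ∈ Finset.range p.bound := Finset.mem_range.2 <| by
      by_contra h
      have := p.bound_zero _ (not_lt.1 h)
      omega
    rw [Finset.sum_tsub_distrib _ fun i _ => by
      split_ifs with hi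
      exacts [hi ▸ hpos, Nat.zero_le _]]
    rw [p.sum_parts, Finset.sum_ite_eq' _ _ (fun _ => 1), if_pos hmem]
    rfl

lemma isMinus_minus (p : NatPartition (N + 1)) : IsMinus p (minus p) := by
  have := one_le_height_zero p
  refine ⟨fun i hi => ?_, ?_⟩
  · show p.part i - (if i = height p 0 - 1 then 1 else 0) = p.part i
    rw [if_neg (by omega), Nat.sub_zero]
  · show p.part _ - (if height p 0 - 1 = height p 0 - 1 then 1 else 0) = _
    rw [if_pos rfl]

lemma IsMinus.part_eq {p : NatPartition (N + 1)} {q : NatPartition N} (h : IsMinus p q) :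
    q.part = (minus p).part := by
  have := one_le_height_zero p
  funext i
  show _ = p.part i - (if i = height p 0 - 1 then 1 else 0)
  by_cases hi : i = height p 0 - 1
  · rw [if_pos hi, hi, h.2]
  · rw [if_neg hi, h.1 i (by omega), Nat.sub_zero]

lemma rowSum_minus_of_lt (p : NatPartition (N + 1)) {k : ℕ} (hk : k < height p 0) :
    rowSum (minus p) k = rowSum p k :=
  Finset.sum_congr rfl fun i hi => by
    show p.part i - (if i = height p 0 - 1 then 1 else 0) = p.part i
    rw [if_neg (by simp only [Finset.mem_range] at hi; omega), Nat.sub_zero]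

lemma rowSum_minus_of_le (p : NatPartition (N + 1)) {k : ℕ} (hk : height p 0 ≤ k) :
    rowSum (minus p) k = N :=
  rowSum_of_part_eq_zero _ <| by
    have := (lt_height_zero_iff p k).not.1 (by omega)
    show p.part k - _ = 0
    omega

lemma colSum_le_colSum_minus_add_one (p : NatPartition (N + 1)) (k : ℕ) :
    colSum p k ≤ colSum (minus p) k + 1 := by
  rw [colSum_eq_sum_min p le_rfl, colSum_eq_sum_min (minus p) le_rfl]
  calc ∑ j ∈ Finset.range p.bound, min (p.part j) k
      ≤ ∑ j ∈ Finset.range p.bound,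
          (min ((minus p).part j) k + if height p 0 - 1 = j then 1 else 0) :=
        Finset.sum_le_sum fun j _ => by
          show _ ≤ min (p.part j - if j = height p 0 - 1 then 1 else 0) k + _
          split_ifs <;> omega
    _ ≤ ∑ j ∈ Finset.range (minus p).bound, min ((minus p).part j) k + 1 := by
        rw [Finset.sum_add_distrib, Finset.sum_ite_eq]
        split_ifs <;> simp [minus]

lemma Dominates.minus {p₁ p₂ : NatPartition (N + 1)} (h : Dominates p₁ p₂) :
    Dominates (minus p₁) (minus p₂) := fun k => by
  show rowSum (NatPartition.minus p₂) k ≤ rowSum (NatPartition.minus p₁) k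
  have hk : rowSum p₂ k ≤ rowSum p₁ k := h k
  by_cases h₁ : height p₁ 0 ≤ k
  · rw [rowSum_minus_of_le p₁ h₁]
    exact rowSum_le _ k
  rw [rowSum_minus_of_lt p₁ (by omega)]
  by_cases h₂ : height p₂ 0 ≤ k
  · have := rowSum_of_height_le p₂ h₂
    have := rowSum_lt_of_lt_height p₁ (by omega : k < height p₁ 0)
    omega
  · rw [rowSum_minus_of_lt p₂ (by omega)]
    exact hk

def plus (q : NatPartition N) : NatPartition (N + 1) where
  part i := q.part i + if i = 0 then 1 else 0
  antitone i j hij := by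
    have := q.antitone hij
    split_ifs <;> omega
  bound := q.bound + 1
  bound_zero i hi := by
    rw [q.bound_zero i (by omega), if_neg (by omega)]
  sum_parts := by
    rw [Finset.sum_add_distrib, Finset.sum_ite_eq' _ _ (fun _ => 1),
      if_pos (Finset.mem_range.2 (Nat.succ_pos _))]
    congr 1
    exact rowSum_of_part_eq_zero q (q.bound_zero _ (Nat.le_succ _))

lemma isPlus_plus (q : NatPartition N) : IsPlus q (plus q) :=
  ⟨rfl, fun i hi => by
    show q.part i + (if i = 0 then 1 else 0) = q.part i
    rw [if_neg (by omega), Nat.add_zero]⟩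

lemma IsPlus.part_eq {q : NatPartition N} {p : NatPartition (N + 1)} (h : IsPlus q p) :
    p.part = (plus q).part := by
  funext i
  show _ = q.part i + (if i = 0 then 1 else 0)
  rcases Nat.eq_zero_or_pos i with rfl | hi
  · exact h.1
  · rw [h.2 i hi, if_neg (by omega), Nat.add_zero]

lemma rowSum_plus (q : NatPartition N) {k : ℕ} (hk : 1 ≤ k) :
    rowSum (plus q) k = rowSum q k + 1 := by
  show ∑ i ∈ Finset.range k, (q.part i + if i = 0 then 1 else 0) = _
  rw [Finset.sum_add_distrib, Finset.sum_ite_eq' _ _ (fun _ => 1),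
    if_pos (Finset.mem_range.2 hk)]
  rfl

lemma colSum_le_colSum_plus (q : NatPartition N) (k : ℕ) : colSum q k ≤ colSum (plus q) k := by
  rw [colSum_eq_sum_min q (Nat.le_succ q.bound), colSum_eq_sum_min (plus q) le_rfl]
  exact Finset.sum_le_sum fun j _ => min_le_min_right k (Nat.le_add_right _ _)

lemma Dominates.plus {q₁ q₂ : NatPartition N} (h : Dominates q₁ q₂) :
    Dominates (plus q₁) (plus q₂) := fun k => by
  show rowSum (NatPartition.plus q₂) k ≤ rowSum (NatPartition.plus q₁) k
  rcases Nat.eq_zero_or_pos k with rfl | hk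
  · simp
  · rw [rowSum_plus q₁ hk, rowSum_plus q₂ hk]
    exact Nat.add_le_add_right (h k) 1

end MinusPlus

end NatPartition

open NatPartition

section LusztigSpaltenstein

variable {n : ℕ}

lemma IsDLSBC.part_eq {p : NatPartition (2 * n + 1)} {q : NatPartition (2 * n)}
    (hq : IsDLSBC n p q) : q.part = transposeFun (collapse (minus p)) := by
  obtain ⟨c, ⟨pm, hpm, hc⟩, hqc⟩ := hq
  rw [hqc, transposeFun_congr
    ((hc.of_part_eq hpm.part_eq).part_eq (isCollapse_collapse (by omega) _))]

lemma IsDLSCB.part_eq {q : NatPartition (2 * n)} {p : NatPartition (2 * n + 1)}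
    (hp : IsDLSCB n q p) : p.part = transposeFun (collapse (plus q)) := by
  obtain ⟨b, ⟨qp, hqp, hb⟩, hpb⟩ := hp
  rw [hpb, transposeFun_congr
    ((hb.of_part_eq hqp.part_eq).part_eq (isCollapse_collapse (by omega) _))]

lemma isDLSBC_transpose_collapse_minus (p : NatPartition (2 * n + 1)) :
    IsDLSBC n p (transpose (collapse (minus p))) :=
  ⟨_, ⟨minus p, isMinus_minus p, isCollapse_collapse (by omega) _⟩, rfl⟩

lemma isDLSCB_transpose_collapse_plus (q : NatPartition (2 * n)) :
    IsDLSCB n q (transpose (collapse (plus q))) :=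
  ⟨_, ⟨plus q, isPlus_plus q, isCollapse_collapse (by omega) _⟩, rfl⟩

lemma rowSum_collapse_minus_mod_two {p : NatPartition (2 * n + 1)} (hp : SpecialCond 0 1 p)
    {k : ℕ} (hk : k % 2 = 0) : rowSum (collapse (minus p)) k % 2 = 0 := by
  suffices (minus p).part k < (minus p).part (k - 1) ∨ (minus p).part k % 2 = 0 ∨
      rowSum (minus p) k % 2 = 0 by
    have := rowSum_collapse_mod_two (minus p) (k := k) (by omega) (by omega)
    omega
  have hpart : ∀ i, (minus p).part i = p.part i - if i = height p 0 - 1 then 1 else 0 :=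
    fun _ => rfl
  rcases Nat.eq_zero_or_pos k with rfl | hk0
  · simp
  by_cases hkh : height p 0 ≤ k
  · right; left
    have := (lt_height_zero_iff p k).not.1 (by omega)
    rw [hpart]
    omega
  by_cases hlast : k = height p 0 - 1
  · left
    have : 1 ≤ p.part k := hlast ▸ one_le_part_height_zero_sub_one p
    have := p.antitone (Nat.sub_le k 1)
    rw [hpart, hpart, if_pos hlast, if_neg (by omega)]
    omega
  · right
    have := hp.rowSum_mod_two (by omega) (k := k + 1) (by omega)
    rw [rowSum_succ] at this
    rw [hpart, if_neg hlast, rowSum_minus_of_lt p (by omega)]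
    omega

lemma rowSum_collapse_plus_mod_two {q : NatPartition (2 * n)} (hq : SpecialCond 1 0 q)
    {k : ℕ} (hk : k % 2 = 1) : rowSum (collapse (plus q)) k % 2 = 1 := by
  suffices (plus q).part k < (plus q).part (k - 1) ∨ (plus q).part k % 2 = 1 ∨
      rowSum (plus q) k % 2 = 1 by
    have := rowSum_collapse_mod_two (plus q) (k := k) (by omega) (by omega)
    omega
  have hpart : ∀ i, (plus q).part i = q.part i + if i = 0 then 1 else 0 := fun _ => rfl
  by_cases hk1 : k = 1
  · left
    subst hk1
    have := q.antitone (Nat.zero_le 1)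
    rw [hpart, hpart]
    simp only [Nat.sub_self, if_true, one_ne_zero, if_false]
    omega
  · right
    have := hq.rowSum_mod_two (by omega) (k := k + 1) (by omega)
    rw [rowSum_succ] at this
    rw [hpart, if_neg (by omega), rowSum_plus q (by omega)]
    omega

lemma IsDLSBC.specialCond {p : NatPartition (2 * n + 1)} {q : NatPartition (2 * n)}
    (hq : IsDLSBC n p q) (hp : SpecialCond 0 1 p) : SpecialCond 1 0 q :=
  specialCond_of_part_eq_transposeFun (by omega) (by omega)
    (isCollapse_collapse (by omega) _).1
    (fun k hk => by have := rowSum_collapse_minus_mod_two hp (k := k) (by omega); omega)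
    hq.part_eq

lemma IsDLSCB.specialCond {q : NatPartition (2 * n)} {p : NatPartition (2 * n + 1)}
    (hp : IsDLSCB n q p) (hq : SpecialCond 1 0 q) : SpecialCond 0 1 p :=
  specialCond_of_part_eq_transposeFun (by omega) (by omega)
    (isCollapse_collapse (by omega) _).1
    (fun k hk => by have := rowSum_collapse_plus_mod_two hq (k := k) (by omega); omega)
    hp.part_eq

lemma IsDLSBC.isCollapse_plus_transpose {p : NatPartition (2 * n + 1)}
    {q : NatPartition (2 * n)} (hq : IsDLSBC n p q) (hp : SpecialCond 0 1 p) :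
    IsCollapse 0 (plus q) (transpose p) := by
  have hrow := rowSum_of_part_eq_transposeFun hq.part_eq
  have hcol := colSum_of_part_eq_transposeFun hq.part_eq
  have hprofile := (isCollapseProfile_collapseProfile (minus p)).colSum_le
  have hc_of_lt : ∀ k, k < height p 0 → (k * (2 * n) + rowSum p k) % 2 = 0 →
      rowSum (collapse (minus p)) k = rowSum p k := fun k hk hpar => by
    rw [rowSum_collapse_of_mod_two _ (by rwa [rowSum_minus_of_lt p hk]),
      rowSum_minus_of_lt p hk]
  refine isCollapse_transpose hp (by omega) (by omega) (fun k => ?_) (fun k _ => ?_)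
    (fun k hk hlt => ?_)
  · rcases Nat.eq_zero_or_pos k with rfl | hk
    · simp
    have := colSum_le_colSum_minus_add_one p k
    have := hprofile k
    rw [rowSum_plus q hk, hrow, colSum_collapse]
    omega
  · have := colSum_le_colSum_plus q k
    have := hcol k
    by_cases hkh : height p 0 ≤ k
    · have : rowSum (collapse (minus p)) k = 2 * n := by
        rw [rowSum_collapse_of_mod_two _ (by rw [rowSum_minus_of_le p hkh]; simp [Nat.mul_mod]),
          rowSum_minus_of_le p hkh]
      have := rowSum_le p k
      omega
    · have := rowSum_le_rowSum_collapse_add_one (minus p) k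
      rw [rowSum_minus_of_lt p (by omega)] at this
      omega
  · have heven := hp.rowSum_mod_two_of_part_lt (by omega) (by omega) hk hlt
    have hkh : k < height p 0 := by
      by_contra h
      rw [rowSum_of_height_le p (not_lt.1 h)] at heven
      omega
    rw [← hc_of_lt k hkh (by simp [Nat.add_mod, Nat.mul_mod, heven]), ← hcol]
    exact colSum_le_colSum_plus q k

lemma IsDLSCB.isCollapse_minus_transpose {q : NatPartition (2 * n)}
    {p : NatPartition (2 * n + 1)} (hp : IsDLSCB n q p) (hq : SpecialCond 1 0 q) :
    IsCollapse 1 (minus p) (transpose q) := by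
  have hrow := rowSum_of_part_eq_transposeFun hp.part_eq
  have hcol := colSum_of_part_eq_transposeFun hp.part_eq
  refine isCollapse_transpose hq (by omega) (by omega) (fun k => ?_) (fun k _ => ?_)
    (fun k hk hlt => ?_)
  · by_cases hkh : height p 0 ≤ k
    · rw [rowSum_minus_of_le p hkh]
      exact colSum_le q k
    · have := colSum_le_colSum_plus q k
      have := (isCollapseProfile_collapseProfile (plus q)).colSum_le k
      rw [rowSum_minus_of_lt p (by omega), hrow, colSum_collapse]
      omega
  · rcases Nat.eq_zero_or_pos k with rfl | hk
    · simp
    have hb := rowSum_le_rowSum_collapse_add_one (plus q) k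
    have := colSum_le_colSum_minus_add_one p k
    rw [rowSum_plus q hk] at hb
    rw [hcol] at this
    omega
  · have heven := hq.rowSum_mod_two_of_part_lt (by omega) (by omega) hk hlt
    have hk1 : 1 ≤ k := by omega
    have hb : rowSum (collapse (plus q)) k = rowSum q k + 1 := by
      rw [rowSum_collapse_of_mod_two _ (by
        rw [rowSum_plus q hk1, Nat.add_mod, Nat.mul_mod, Nat.add_mod (rowSum q k)]
        simp [heven, show k % 2 = 1 by omega]), rowSum_plus q hk1]
    have := colSum_le_colSum_minus_add_one p k
    rw [hcol, hb] at this
    omega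

lemma IsDLSCB.part_eq_of_isDLSBC {p r : NatPartition (2 * n + 1)} {q : NatPartition (2 * n)}
    (hp : SpecialCond 0 1 p) (hq : IsDLSBC n p q) (hr : IsDLSCB n q r) : r.part = p.part := by
  rw [hr.part_eq, transposeFun_congr ((isCollapse_collapse (ε := 0) (by omega) _).part_eq
    (hq.isCollapse_plus_transpose hp)), transposeFun_transpose]

lemma IsDLSBC.part_eq_of_isDLSCB {q r : NatPartition (2 * n)} {p : NatPartition (2 * n + 1)}
    (hq : SpecialCond 1 0 q) (hp : IsDLSCB n q p) (hr : IsDLSBC n p r) : r.part = q.part := by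
  rw [hr.part_eq, transposeFun_congr ((isCollapse_collapse (ε := 1) (by omega) _).part_eq
    (hp.isCollapse_minus_transpose hq)), transposeFun_transpose]

lemma IsDLSBC.dominates {p₁ p₂ : NatPartition (2 * n + 1)} {q₁ q₂ : NatPartition (2 * n)}
    (hq₁ : IsDLSBC n p₁ q₁) (hq₂ : IsDLSBC n p₂ q₂) (h : Dominates p₁ p₂) :
    Dominates q₂ q₁ := by
  have hc := (isCollapse_collapse (ε := 1) (by omega) (minus p₁)).dominates
    (isCollapse_collapse (by omega) (minus p₂)) h.minus
  exact (dominates_congr hq₂.part_eq hq₁.part_eq).2 hc.transpose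

lemma IsDLSCB.dominates {q₁ q₂ : NatPartition (2 * n)} {p₁ p₂ : NatPartition (2 * n + 1)}
    (hp₁ : IsDLSCB n q₁ p₁) (hp₂ : IsDLSCB n q₂ p₂) (h : Dominates q₁ q₂) :
    Dominates p₂ p₁ := by
  have hc := (isCollapse_collapse (ε := 0) (by omega) (plus q₁)).dominates
    (isCollapse_collapse (by omega) (plus q₂)) h.plus
  exact (dominates_congr hp₂.part_eq hp₁.part_eq).2 hc.transpose

end LusztigSpaltenstein

/-- `d_{LS} : P^{sp}_B(2n+1) → P^{sp}_C(2n)` and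
`d_{LS} : P^{sp}_C(2n) → P^{sp}_B(2n+1)` are mutually inverse order-reversing
bijections. -/
theorem dLS_mutuallyInverse_orderReversing (n : ℕ) :
    (∀ p : NatPartition (2 * n + 1), NatPartition.SpecialCond 0 1 p →
      ∃ q : NatPartition (2 * n), IsDLSBC n p q) ∧
    (∀ (p : NatPartition (2 * n + 1)) (q : NatPartition (2 * n)),
      NatPartition.SpecialCond 0 1 p → IsDLSBC n p q → NatPartition.SpecialCond 1 0 q) ∧
    (∀ q : NatPartition (2 * n), NatPartition.SpecialCond 1 0 q →
      ∃ p : NatPartition (2 * n + 1), IsDLSCB n q p) ∧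
    (∀ (q : NatPartition (2 * n)) (p : NatPartition (2 * n + 1)),
      NatPartition.SpecialCond 1 0 q → IsDLSCB n q p → NatPartition.SpecialCond 0 1 p) ∧
    (∀ (p : NatPartition (2 * n + 1)) (q : NatPartition (2 * n)) (r : NatPartition (2 * n + 1)),
      NatPartition.SpecialCond 0 1 p → IsDLSBC n p q → IsDLSCB n q r → r.part = p.part) ∧
    (∀ (q : NatPartition (2 * n)) (p : NatPartition (2 * n + 1)) (r : NatPartition (2 * n)),
      NatPartition.SpecialCond 1 0 q → IsDLSCB n q p → IsDLSBC n p r → r.part = q.part) ∧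
    (∀ (p₁ p₂ : NatPartition (2 * n + 1)) (q₁ q₂ : NatPartition (2 * n)),
      NatPartition.SpecialCond 0 1 p₁ → NatPartition.SpecialCond 0 1 p₂ →
      IsDLSBC n p₁ q₁ → IsDLSBC n p₂ q₂ →
      NatPartition.Dominates p₁ p₂ → NatPartition.Dominates q₂ q₁) ∧
    (∀ (q₁ q₂ : NatPartition (2 * n)) (p₁ p₂ : NatPartition (2 * n + 1)),
      NatPartition.SpecialCond 1 0 q₁ → NatPartition.SpecialCond 1 0 q₂ →
      IsDLSCB n q₁ p₁ → IsDLSCB n q₂ p₂ →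
      NatPartition.Dominates q₁ q₂ → NatPartition.Dominates p₂ p₁) :=
  ⟨fun p _ => ⟨_, isDLSBC_transpose_collapse_minus p⟩,
    fun _ _ hp hq => hq.specialCond hp,
    fun q _ => ⟨_, isDLSCB_transpose_collapse_plus q⟩,
    fun _ _ hq hp => hp.specialCond hq,
    fun _ _ _ hp hq hr => hr.part_eq_of_isDLSBC hp hq,
    fun _ _ _ hq hp hr => hr.part_eq_of_isDLSCB hq hp,
    fun _ _ _ _ _ _ hq₁ hq₂ h => hq₁.dominates hq₂ h,
    fun _ _ _ _ _ _ hp₁ hp₂ h => hp₁.dominates hp₂ h⟩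
end

section
/- Non-special partitions have a canonical special cover: let X ∈ {B, C, D} with associated parities (ε, ε'), and let ν ∈ P_X(N) be a partition with all parts of parity ≢ ε having even multiplicity. Let S be the set of parts s of ν with s ≡ ε (mod 2) and h_ν(s) ≢ ε' (mod 2). Define λ from ν by replacing each block [s^{m(s)}] for s ∈ S by [s+1, s^{m(s)−2}, s−1]. Then λ is a partition of N lying in P^{sp}_{ε,ε'}(N) (i.e. λ is special) and ν ⪯ λ in dominance order. -/
/-- A partition of `N`: a weakly decreasing function `ℕ → ℕ` (0-indexed parts,
eventually zero) whose sum is `N`. -/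
structure NPartition (N : ℕ) where
  part : ℕ → ℕ
  antitone : ∀ ⦃i j : ℕ⦄, i ≤ j → part j ≤ part i
  bound : ℕ
  bound_zero : ∀ i, bound ≤ i → part i = 0
  sum_parts : ∑ i ∈ Finset.range bound, part i = N

namespace NPartition

variable {M N : ℕ}

/-- Multiplicity of the part `s` in `p` (intended for `s ≥ 1`). -/
def mult (p : NPartition N) (s : ℕ) : ℕ :=
  ((Finset.range p.bound).filter (fun j => p.part j = s)).card

/-- Height `h_p(s) = #{j : p_j ≥ s}`, with the convention that `height p 0`
is the number of (positive) parts of `p`. -/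
def height (p : NPartition N) (s : ℕ) : ℕ :=
  ((Finset.range p.bound).filter (fun j => max s 1 ≤ p.part j)).card

/-- `Dominates lam mu` means `mu ⪯ lam` in the dominance order. -/
def Dominates (lam mu : NPartition N) : Prop :=
  ∀ k : ℕ, ∑ i ∈ Finset.range k, mu.part i ≤ ∑ i ∈ Finset.range k, lam.part i

/-- The transpose (conjugate) part function: `(p*)_i = #{j : p_j ≥ i+1}` (0-indexed). -/
def transposeFun (p : NPartition N) : ℕ → ℕ :=
  fun i => ((Finset.range p.bound).filter (fun j => i + 1 ≤ p.part j)).card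

/-- Every (positive) part congruent to `ε` mod 2 has even multiplicity. -/
def EvenMult (ε : ℕ) (p : NPartition N) : Prop :=
  ∀ s, 1 ≤ s → s % 2 = ε % 2 → mult p s % 2 = 0

/-- Membership in `P_{ε,ε'}(N)`: parts `≡ ε (mod 2)` have even multiplicity and
height `≡ ε' (mod 2)`, including the convention at `s = 0` (whose height is the
number of parts) when `ε = 0`. -/
def SpecialCond (ε ε' : ℕ) (p : NPartition N) : Prop :=
  EvenMult ε p ∧
  (∀ s, 1 ≤ s → mult p s ≠ 0 → s % 2 = ε % 2 → height p s % 2 = ε' % 2) ∧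
  (ε = 0 → height p 0 % 2 = ε' % 2)

/-- `q` is the `ε`-collapse of `p`: the dominance-greatest partition dominated by `p`
all of whose parts `≡ ε (mod 2)` have even multiplicity. -/
def IsCollapse (ε : ℕ) (p q : NPartition N) : Prop :=
  EvenMult ε q ∧ Dominates p q ∧
    ∀ r : NPartition N, EvenMult ε r → Dominates p r → Dominates q r

/-- `q = p⁻`: decrease the smallest (positive) part of `p` by one. -/
def IsMinus (p : NPartition M) (q : NPartition N) : Prop :=
  (∀ i, i + 1 ≠ height p 0 → q.part i = p.part i) ∧
  q.part (height p 0 - 1) = p.part (height p 0 - 1) - 1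

/-- `q = p⁺`: increase the largest part of `p` by one. -/
def IsPlus (p : NPartition M) (q : NPartition N) : Prop :=
  q.part 0 = p.part 0 + 1 ∧ ∀ i, 1 ≤ i → q.part i = p.part i

/-- `q = f_{BC}(p) = (p⁻)_C`. -/
def IsFBC (n : ℕ) (p : NPartition (2*n+1)) (q : NPartition (2*n)) : Prop :=
  ∃ pm : NPartition (2*n), IsMinus p pm ∧ IsCollapse 1 pm q

/-- `q = f_{CB}(p) = (p⁺)_B`. -/
def IsFCB (n : ℕ) (p : NPartition (2*n)) (q : NPartition (2*n+1)) : Prop :=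
  ∃ pp : NPartition (2*n+1), IsPlus p pp ∧ IsCollapse 0 pp q

end NPartition


/-- The set `S` of parts of `ν` that violate the special condition: parts
`s ≡ ε (mod 2)` with height `h_ν(s) ≢ ε' (mod 2)`. -/
def Spart {N : ℕ} (ν : NPartition N) (ε ε' : ℕ) (s : ℕ) : Prop :=
  1 ≤ s ∧ ν.mult s ≠ 0 ∧ s % 2 = ε % 2 ∧ ν.height s % 2 ≠ ε' % 2

instance {N : ℕ} (ν : NPartition N) (ε ε' s : ℕ) : Decidable (Spart ν ε ε' s) := by
  unfold Spart; infer_instance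

/-!
Everything is read off the height function `h(t) = #{parts ≥ t}`. Splitting two parts `s`
into `s + 1, s - 1` lowers `h(s)` by one and raises `h(s + 1)` by one. Parts in `S` have
parity `ε`, so their neighbours `s ± 1` never lie in `S`: at a part of parity `ε` the
multiplicity drops by `0` or `2` and the height drops exactly when its parity was wrong,
while the number of parts is unchanged and, for `ε = 0`, has the parity of `N`.
For dominance, `∑_{i<k} p_i = ∑_t min(k, h(t))`, and since `h(s) ≥ h(s + 1) + 2` for
`s ∈ S`, moving one unit from `h(s)` to `h(s + 1)` cannot decrease `min(k, ·)`-sums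
by concavity.
-/

open Finset

namespace NPartition

section Basic

variable {N : ℕ} (p : NPartition N)

lemma part_le_part_zero (j : ℕ) : p.part j ≤ p.part 0 := p.antitone (Nat.zero_le j)

lemma height_zero : p.height 0 = p.height 1 := by
  simp [height]

lemma height_eq_card {s : ℕ} (hs : 1 ≤ s) :
    p.height s = #{j ∈ range p.bound | s ≤ p.part j} := by
  rw [height, max_eq_left hs]

lemma height_eq_height_succ_add_mult {s : ℕ} (hs : 1 ≤ s) :
    p.height s = p.height (s + 1) + p.mult s := by
  rw [height_eq_card p hs, height_eq_card p (by omega), mult,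
    ← card_filter_add_card_filter_not (p := fun j => s + 1 ≤ p.part j), filter_filter,
    filter_filter]
  congr 2 <;> exact filter_congr fun j _ => by omega

lemma le_part_zero_of_mult_ne_zero {s : ℕ} (h : p.mult s ≠ 0) : s ≤ p.part 0 := by
  obtain ⟨j, hj⟩ := card_ne_zero.mp h
  exact (mem_filter.mp hj).2 ▸ p.part_le_part_zero j

lemma height_eq_zero_of_part_zero_lt {s : ℕ} (hs : p.part 0 < s) : p.height s = 0 := by
  rw [height, card_eq_zero, filter_eq_empty_iff]
  intro j _
  have := p.part_le_part_zero j
  omega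

lemma le_part_iff_lt_height {t : ℕ} (ht : 1 ≤ t) (i : ℕ) :
    t ≤ p.part i ↔ i < p.height t := by
  have hbound : ∀ j, t ≤ p.part j → j < p.bound := fun j hj => by
    by_contra hb
    have := p.bound_zero j (by omega)
    omega
  rw [height_eq_card p ht]
  constructor
  · intro h
    have : range (i + 1) ⊆ {j ∈ range p.bound | t ≤ p.part j} := fun j hj => by
      have hle := h.trans (p.antitone (Nat.lt_succ_iff.mp (mem_range.mp hj)))
      exact mem_filter.mpr ⟨mem_range.mpr (hbound j hle), hle⟩
    simpa using card_le_card this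
  · intro h
    by_contra hb
    have : {j ∈ range p.bound | t ≤ p.part j} ⊆ range i := fun j hj => by
      by_contra hji
      exact hb ((mem_filter.mp hj).2.trans (p.antitone (by simpa using hji)))
    simpa using (card_le_card this).trans_lt' h

lemma sum_range_part_eq_sum_min_height {M : ℕ} (hM : p.part 0 ≤ M) (k : ℕ) :
    ∑ i ∈ range k, p.part i = ∑ t ∈ Icc 1 M, min k (p.height t) := by
  have hpart : ∀ i, p.part i = ∑ t ∈ Icc 1 M, if t ≤ p.part i then 1 else 0 := by
    intro i
    rw [sum_boole, Nat.cast_id, filter_congr (q := fun t => t ≤ p.part i) (fun _ _ => Iff.rfl)]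
    have : ({t ∈ Icc 1 M | t ≤ p.part i} : Finset ℕ) = Icc 1 (p.part i) := by
      ext t
      have := (p.part_le_part_zero i).trans hM
      simp only [mem_filter, mem_Icc]
      omega
    simp [this]
  have hheight : ∀ t ∈ Icc 1 M, ∑ i ∈ range k, (if t ≤ p.part i then 1 else 0) =
      min k (p.height t) := by
    intro t ht
    rw [sum_boole, Nat.cast_id, ← card_range (min k (p.height t))]
    congr 1
    ext i
    simp [le_part_iff_lt_height p (mem_Icc.mp ht).1]
  rw [sum_congr rfl fun i _ => hpart i, sum_comm, sum_congr rfl hheight]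

lemma sum_comp_part_eq_sum_mult_smul {R : Type*} [AddCommMonoid R] (f : ℕ → R) :
    ∑ j ∈ range p.bound, f (p.part j) = ∑ t ∈ range (p.part 0 + 1), p.mult t • f t := by
  rw [← sum_fiberwise_of_maps_to' (t := range (p.part 0 + 1))
    (fun j _ => mem_range.mpr (Nat.lt_succ_of_le (p.part_le_part_zero j)))]
  simp [mult]

/-- When every even part has even multiplicity, odd parts alone decide the parity
of both the number of parts and their sum. -/
lemma height_one_mod_two (hp : EvenMult 0 p) : p.height 1 % 2 = N % 2 := by
  rw [← ZMod.natCast_eq_natCast_iff']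
  have hN := congrArg (Nat.cast : ℕ → ZMod 2) p.sum_parts
  rw [Nat.cast_sum, sum_comp_part_eq_sum_mult_smul p (Nat.cast : ℕ → ZMod 2)] at hN
  rw [height_eq_card p le_rfl, natCast_card_filter,
    sum_comp_part_eq_sum_mult_smul p (fun t => if 1 ≤ t then (1 : ZMod 2) else 0), ← hN]
  refine sum_congr rfl fun t _ => ?_
  rcases Nat.even_or_odd t with ⟨u, rfl⟩ | ⟨u, rfl⟩
  · rcases Nat.eq_zero_or_pos u with rfl | hu
    · simp
    · have hm : (p.mult (u + u) : ZMod 2) = 0 :=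
        (ZMod.natCast_eq_zero_iff_even).mpr (Nat.even_iff.mpr (hp _ (by omega) (by omega)))
      simp [nsmul_eq_mul, hm]
  · have : ((2 * u + 1 : ℕ) : ZMod 2) = 1 := by
      rw [ZMod.natCast_eq_one_iff_odd]; exact odd_two_mul_add_one u
    simp [this]

end Basic

section PairSplit

variable {N : ℕ} (S : ℕ → Prop) [DecidablePred S]

/-- `lam` arises from `ν` by replacing, for each `s` with `S s`, two parts equal to `s`
by the parts `s + 1` and `s - 1`. -/
def IsPairSplit (ν lam : NPartition N) : Prop :=
  ∀ t, 1 ≤ t → lam.mult t = (if S t then ν.mult t - 2 else ν.mult t) +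
    (if S (t + 1) then 1 else 0) + (if S (t - 1) then 1 else 0)

variable {S} {ν lam : NPartition N}

theorem IsPairSplit.height_add (h : IsPairSplit S ν lam)
    (hS : ∀ s, S s → 1 ≤ s ∧ 2 ≤ ν.mult s) {s : ℕ} (hs : 1 ≤ s) :
    lam.height s + (if S s then 1 else 0) = ν.height s + (if S (s - 1) then 1 else 0) := by
  have hS_le : ∀ s, S s → s ≤ ν.part 0 := fun s hs' =>
    ν.le_part_zero_of_mult_ne_zero (by have := (hS s hs').2; omega)
  obtain ⟨d, hd⟩ : ∃ d, max (ν.part 0) (lam.part 0) + 1 < s + d :=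
    ⟨max (ν.part 0) (lam.part 0) + 2, by omega⟩
  induction d generalizing s with
  | zero =>
    rw [ν.height_eq_zero_of_part_zero_lt (by omega), lam.height_eq_zero_of_part_zero_lt (by omega),
      if_neg fun h => by have := hS_le _ h; omega, if_neg fun h => by have := hS_le _ h; omega]
  | succ d ih =>
    have ih := ih (s := s + 1) (by omega) (by omega)
    rw [Nat.add_sub_cancel] at ih
    have hlam := lam.height_eq_height_succ_add_mult hs
    have hν := ν.height_eq_height_succ_add_mult hs
    have hmult := h s hs
    by_cases hs' : S s
    · have := (hS s hs').2
      simp only [hs', if_true] at ih hmult ⊢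
      split_ifs at * <;> omega
    · simp only [hs', if_false] at ih hmult ⊢
      split_ifs at * <;> omega

/-- The defect allowed at `m` is repaid by the raised height at `m + 1`. -/
theorem IsPairSplit.sum_min_height_le (h : IsPairSplit S ν lam)
    (hS : ∀ s, S s → 1 ≤ s ∧ 2 ≤ ν.mult s) (hS_succ : ∀ s, S s → ¬ S (s + 1))
    (k m : ℕ) :
    ∑ t ∈ Icc 1 m, min k (ν.height t) ≤
      ∑ t ∈ Icc 1 m, min k (lam.height t) + if S m ∧ ν.height m ≤ k then 1 else 0 := by
  induction m with
  | zero => simp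
  | succ m ih =>
    rw [sum_Icc_succ_top (by omega), sum_Icc_succ_top (by omega)]
    simp only [ite_and] at ih ⊢
    have hrel := h.height_add hS (Nat.le_add_left 1 m)
    rw [Nat.add_sub_cancel] at hrel
    by_cases hm : S m
    · have hm_succ := hS_succ m hm
      have hmult := (hS m hm).2
      have hheight := ν.height_eq_height_succ_add_mult (hS m hm).1
      simp only [hm, hm_succ, if_true, if_false] at ih hrel ⊢
      split_ifs at ih <;> omega
    · simp only [hm, if_false] at ih hrel ⊢
      split_ifs at hrel ⊢ <;> omega

theorem IsPairSplit.dominates (h : IsPairSplit S ν lam)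
    (hS : ∀ s, S s → 1 ≤ s ∧ 2 ≤ ν.mult s) (hS_succ : ∀ s, S s → ¬ S (s + 1)) :
    Dominates lam ν := by
  intro k
  set M := max (ν.part 0) (lam.part 0) + 1
  have hM : ¬ S M := fun hM => by
    have := ν.le_part_zero_of_mult_ne_zero (by have := (hS M hM).2; omega : ν.mult M ≠ 0)
    omega
  rw [ν.sum_range_part_eq_sum_min_height (by omega : ν.part 0 ≤ M),
    lam.sum_range_part_eq_sum_min_height (by omega : lam.part 0 ≤ M)]
  simpa [hM] using h.sum_min_height_le hS hS_succ k M

end PairSplit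

end NPartition

open NPartition

namespace Spart

variable {N ε ε' s : ℕ} {ν lam : NPartition N}

lemma not_zero : ¬ Spart ν ε ε' 0 := fun h => absurd h.1 (by norm_num)

lemma not_succ (hs : s % 2 = ε % 2) : ¬ Spart ν ε ε' (s + 1) := fun h => by
  have := h.2.2.1
  omega

lemma not_pred (hs : s % 2 = ε % 2) : ¬ Spart ν ε ε' (s - 1) := fun h => by
  have := h.1
  have := h.2.2.1
  omega

lemma one_le_and_two_le_mult (hν : EvenMult ε ν) :
    ∀ s, Spart ν ε ε' s → 1 ≤ s ∧ 2 ≤ ν.mult s := fun s h => by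
  have := hν s h.1 h.2.2.1
  have := h.2.1
  exact ⟨h.1, by omega⟩

lemma mult_of_isPairSplit (h : IsPairSplit (Spart ν ε ε') ν lam) (hs : 1 ≤ s)
    (hpar : s % 2 = ε % 2) :
    lam.mult s = if Spart ν ε ε' s then ν.mult s - 2 else ν.mult s := by
  simpa [not_succ hpar, not_pred hpar] using h s hs

lemma evenMult_of_isPairSplit (hν : EvenMult ε ν) (h : IsPairSplit (Spart ν ε ε') ν lam) :
    EvenMult ε lam := fun s hs hpar => by
  have := hν s hs hpar
  rw [mult_of_isPairSplit h hs hpar]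
  split_ifs <;> omega

lemma height_add_of_isPairSplit (hν : EvenMult ε ν)
    (h : IsPairSplit (Spart ν ε ε') ν lam) (hs : 1 ≤ s) (hpar : s % 2 = ε % 2) :
    lam.height s + (if Spart ν ε ε' s then 1 else 0) = ν.height s := by
  simpa [not_pred hpar] using h.height_add (one_le_and_two_le_mult hν) hs

lemma height_mod_two_of_isPairSplit (hν : EvenMult ε ν)
    (h : IsPairSplit (Spart ν ε ε') ν lam) (hs : 1 ≤ s) (hm : lam.mult s ≠ 0)
    (hpar : s % 2 = ε % 2) :
    lam.height s % 2 = ε' % 2 := by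
  have hheight := height_add_of_isPairSplit hν h hs hpar
  by_cases hS : Spart ν ε ε' s
  · have := hS.2.2.2
    simp only [hS, if_true] at hheight
    omega
  · have hmult := mult_of_isPairSplit h hs hpar
    simp only [hS, if_false] at hheight hmult
    have : ¬ ν.height s % 2 ≠ ε' % 2 := fun hne => hS ⟨hs, hmult ▸ hm, hpar, hne⟩
    omega

lemma height_one_of_isPairSplit (hν : EvenMult ε ν)
    (h : IsPairSplit (Spart ν ε ε') ν lam) (hε : ε % 2 = 0) : lam.height 1 = ν.height 1 := by
  simpa [not_succ (s := 0) hε.symm, not_zero] using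
    h.height_add (one_le_and_two_le_mult hν) le_rfl

end Spart

/-- the canonical special cover of a partition `ν ∈ P_X(N)` for
`X ∈ {B, C, D}` (with parities `(ε,ε') = (0,1), (1,0), (0,0)` and `N` odd, even,
even respectively): replacing each block `[s^{m(s)}]` with `s ∈ S` by
`[s+1, s^{m(s)-2}, s-1]` (described here via multiplicities) produces a partition
`lam ∈ P^{sp}_{ε,ε'}(N)` with `ν ⪯ lam`. -/
theorem special_cover (N ε ε' : ℕ)
    (htype : (ε = 0 ∧ ε' = 1 ∧ N % 2 = 1) ∨ (ε = 1 ∧ ε' = 0 ∧ N % 2 = 0) ∨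
      (ε = 0 ∧ ε' = 0 ∧ N % 2 = 0))
    (ν : NPartition N) (hν : NPartition.EvenMult ε ν)
    (lam : NPartition N)
    (hlam : ∀ t, 1 ≤ t →
      lam.mult t = (if Spart ν ε ε' t then ν.mult t - 2 else ν.mult t) +
        (if Spart ν ε ε' (t + 1) then 1 else 0) +
        (if Spart ν ε ε' (t - 1) then 1 else 0)) :
    NPartition.SpecialCond ε ε' lam ∧ NPartition.Dominates lam ν := by
  have hsplit : IsPairSplit (Spart ν ε ε') ν lam := hlam
  refine ⟨⟨Spart.evenMult_of_isPairSplit hν hsplit,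
    fun _ hs hm hpar => Spart.height_mod_two_of_isPairSplit hν hsplit hs hm hpar, fun hε => ?_⟩,
    hsplit.dominates (Spart.one_le_and_two_le_mult hν) fun _ h => Spart.not_succ h.2.2.1⟩
  subst hε
  have hparts := ν.height_one_mod_two hν
  rw [lam.height_zero, Spart.height_one_of_isPairSplit hν hsplit rfl]
  rcases htype with ⟨_, _, _⟩ | ⟨_, _, _⟩ | ⟨_, _, _⟩ <;> omega
end
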